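/- arXiv:1512.01802 — 5 statements merged into one kernel-verified Lean document; each statement's English description precedes it below -/
import Mathlib

section
/- Fix real constants $\alpha \ge 0$, $\tilde\alpha \ge 0$, and $0 < s < r$, and let $F(u) = \alpha u + \tilde\alpha (u \wedge s)$. Let $B$ be a standard Brownian motion starting at $0$. Then for every $\beta \ge 0$, $\mathbb{P}\big(\sup_{u \in [0,r]} (B_u + F(u)) \le \beta\big) \le e^{-\frac{(\alpha+\tilde\alpha)^2}{2} s - \frac{\alpha^2}{2}(r-s)}\, e^{(\alpha+\tilde\alpha)\beta}$. -/
open MeasureTheory ProbabilityTheory Real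

/-- A standard one-dimensional Brownian motion started at `0` under the probability
measure `P`: measurable marginals, `B 0 = 0` a.s., continuous sample paths,
independent increments over disjoint time intervals, and Gaussian increments with
variance equal to the length of the time interval. -/
structure IsStandardBM {Ω : Type*} [MeasurableSpace Ω] (P : Measure Ω) (B : ℝ → Ω → ℝ) : Prop where
  meas : ∀ t : ℝ, Measurable (B t)
  init : ∀ᵐ ω ∂P, B 0 ω = 0
  cont : ∀ᵐ ω ∂P, Continuous fun t => B t ω
  indep : ∀ s t u v : ℝ, 0 ≤ s → s ≤ t → t ≤ u → u ≤ v →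
    IndepFun (fun ω => B t ω - B s ω) (fun ω => B v ω - B u ω) P
  gauss : ∀ s t : ℝ, 0 ≤ s → s ≤ t →
    P.map (fun ω => B t ω - B s ω) = gaussianReal 0 (Real.toNNReal (t - s))

lemma gaussianPDFReal_mul_exp_eq (v : NNReal) (hv : (v:ℝ) ≠ 0) (t x : ℝ) :
    gaussianPDFReal 0 v x * Real.exp (t * x)
      = Real.exp ((v:ℝ) * t ^ 2 / 2) * gaussianPDFReal ((v:ℝ) * t) v x := by
  simp only [gaussianPDFReal]
  rw [mul_assoc, ← Real.exp_add, mul_left_comm, ← Real.exp_add]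
  congr 1
  field_simp
  ring

/-- The "Laplace transform" of a Gaussian measure, in `ℝ≥0∞` form:
`∫ exp(t x) dN(0,v)(x) = exp(v t² / 2)`. -/
lemma lintegral_exp_mul_gaussianReal (t : ℝ) (v : NNReal) :
    ∫⁻ x, ENNReal.ofReal (Real.exp (t * x)) ∂(gaussianReal 0 v)
      = ENNReal.ofReal (Real.exp ((v : ℝ) * t ^ 2 / 2)) := by
  by_cases hv : v = 0
  · subst hv
    rw [gaussianReal_zero_var, lintegral_dirac]
    simp
  · have hv' : (v : ℝ) ≠ 0 := by exact_mod_cast hv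
    have hmm : Measurable fun x : ℝ => ENNReal.ofReal (Real.exp (t * x)) := by
      exact (measurable_const.mul measurable_id).exp.ennreal_ofReal
    rw [gaussianReal_of_var_ne_zero _ hv,
      lintegral_withDensity_eq_lintegral_mul _ (measurable_gaussianPDF 0 v)
        hmm]
    have hpt : ∀ x : ℝ, (gaussianPDF 0 v * fun x => ENNReal.ofReal (Real.exp (t * x))) x
        = ENNReal.ofReal (Real.exp ((v : ℝ) * t ^ 2 / 2)) * gaussianPDF ((v : ℝ) * t) v x := by
      intro x
      simp only [Pi.mul_apply, gaussianPDF]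
      rw [← ENNReal.ofReal_mul (gaussianPDFReal_nonneg _ _ _),
        ← ENNReal.ofReal_mul (Real.exp_nonneg _)]
      congr 1
      exact gaussianPDFReal_mul_exp_eq v hv' t x
    rw [lintegral_congr hpt, lintegral_const_mul _ (measurable_gaussianPDF _ v),
      lintegral_gaussianPDF_eq_one _ hv, mul_one]

/-- Let `α ≥ 0`, `α' ≥ 0`, `0 < s < r`, `F(u) = α u + α' (u ⊓ s)`, and let `B` be a
standard Brownian motion started at `0`. Then for every `β ≥ 0`,
`ℙ(sup_{u ∈ [0,r]} (B_u + F(u)) ≤ β) ≤ exp(-(α+α')²s/2 - α²(r-s)/2) · exp((α+α')β)`. -/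
theorem brownian_piecewise_drift_sup_bound_nonneg
    {Ω : Type*} [MeasurableSpace Ω] (P : Measure Ω) [IsProbabilityMeasure P]
    (B : ℝ → Ω → ℝ) (hB : IsStandardBM P B)
    (α α' s r : ℝ) (hα : 0 ≤ α) (hα' : 0 ≤ α') (hs : 0 < s) (hsr : s < r) (β : ℝ) (hβ : 0 ≤ β) :
    P {ω | ∀ u ∈ Set.Icc (0:ℝ) r, B u ω + (α * u + α' * min u s) ≤ β} ≤
      ENNReal.ofReal
        (Real.exp (-((α + α') ^ 2 / 2) * s - α ^ 2 / 2 * (r - s)) * Real.exp ((α + α') * β)) := by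
  set X : Ω → ℝ := fun ω => B s ω - B 0 ω with hXdef
  set Y : Ω → ℝ := fun ω => B r ω - B s ω with hYdef
  have hX : Measurable X := (hB.meas s).sub (hB.meas 0)
  have hY : Measurable Y := (hB.meas r).sub (hB.meas s)
  have hmapX : P.map X = gaussianReal 0 (Real.toNNReal (s - 0)) :=
    hB.gauss 0 s le_rfl hs.le
  have hmapY : P.map Y = gaussianReal 0 (Real.toNNReal (r - s)) :=
    hB.gauss s r hs.le hsr.le
  have hind : IndepFun X Y P := hB.indep 0 s s r le_rfl hs.le le_rfl hsr.le
  set a : ℝ := β - (α + α') * s with ha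
  set b : ℝ := β - α * r - α' * s with hb
  set T : Set Ω := {ω | X ω ≤ a} ∩ {ω | X ω + Y ω ≤ b} with hT
  have hTm : MeasurableSet T :=
    (measurableSet_le hX measurable_const).inter
      (measurableSet_le (hX.add hY) measurable_const)
  -- Step 1 : the event is a.s. contained in T
  have h1 : P {ω | ∀ u ∈ Set.Icc (0:ℝ) r, B u ω + (α * u + α' * min u s) ≤ β} ≤ P T := by
    refine measure_mono_ae ?_
    filter_upwards [hB.init] with ω h0 hω
    have hset : ∀ u ∈ Set.Icc (0:ℝ) r, B u ω + (α * u + α' * min u s) ≤ β := hω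
    have hs' : s ∈ Set.Icc (0:ℝ) r := ⟨hs.le, hsr.le⟩
    have hr' : r ∈ Set.Icc (0:ℝ) r := ⟨(hs.trans hsr).le, le_rfl⟩
    have h1 := hset s hs'
    have h2 := hset r hr'
    rw [min_self] at h1
    rw [min_eq_right hsr.le] at h2
    constructor
    · show X ω ≤ a
      simp only [hXdef, h0, sub_zero, ha]
      linarith
    · show X ω + Y ω ≤ b
      simp only [hXdef, hYdef, h0, sub_zero, hb]
      have : B s ω - 0 + (B r ω - B s ω) = B r ω := by ring
      linarith [this]
  -- Step 2 : Chernoff bound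
  set f : Ω → ENNReal :=
    fun ω => ENNReal.ofReal (Real.exp (α' * (a - X ω) + α * (b - (X ω + Y ω)))) with hf
  have h2 : P T ≤ ∫⁻ ω, f ω ∂P := by
    rw [← lintegral_indicator_one hTm]
    refine lintegral_mono fun ω => ?_
    by_cases hω : ω ∈ T
    · rw [Set.indicator_of_mem hω]
      refine ENNReal.one_le_ofReal.mpr (Real.one_le_exp ?_)
      have hx := hω.1
      have hy := hω.2
      have h1 : (0:ℝ) ≤ α' * (a - X ω) := mul_nonneg hα' (by simpa [sub_nonneg] using hx)
      have h2 : (0:ℝ) ≤ α * (b - (X ω + Y ω)) := mul_nonneg hα (by simpa [sub_nonneg] using hy)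
      linarith
    · rw [Set.indicator_of_notMem hω]; exact zero_le
  -- Step 3 : factor and compute the integral
  have hsplit : ∀ ω, f ω = ENNReal.ofReal (Real.exp (α' * a + α * b)) *
      (ENNReal.ofReal (Real.exp (-(α + α') * X ω)) * ENNReal.ofReal (Real.exp (-α * Y ω))) := by
    intro ω
    have hexp : α' * (a - X ω) + α * (b - (X ω + Y ω))
        = (α' * a + α * b) + (-(α + α') * X ω + -α * Y ω) := by ring
    show ENNReal.ofReal (Real.exp (α' * (a - X ω) + α * (b - (X ω + Y ω)))) = _
    symm
    rw [← ENNReal.ofReal_mul (Real.exp_nonneg _), ← Real.exp_add,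
      ← ENNReal.ofReal_mul (Real.exp_nonneg _), ← Real.exp_add]
    exact congrArg ENNReal.ofReal (congrArg Real.exp hexp.symm)
  have hmg : Measurable fun x : ℝ => ENNReal.ofReal (Real.exp (-(α + α') * x)) :=
    (measurable_id.const_mul _).exp.ennreal_ofReal
  have hmh : Measurable fun x : ℝ => ENNReal.ofReal (Real.exp (-α * x)) :=
    (measurable_id.const_mul _).exp.ennreal_ofReal
  have hindc : IndepFun (fun ω => ENNReal.ofReal (Real.exp (-(α + α') * X ω)))
      (fun ω => ENNReal.ofReal (Real.exp (-α * Y ω))) P := hind.comp hmg hmh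
  have hXint : ∫⁻ ω, ENNReal.ofReal (Real.exp (-(α + α') * X ω)) ∂P
      = ENNReal.ofReal (Real.exp ((s - 0) * (α + α') ^ 2 / 2)) := by
    rw [← lintegral_map hmg hX, hmapX, lintegral_exp_mul_gaussianReal]
    congr 2
    rw [Real.coe_toNNReal _ (by linarith)]
    ring
  have hYint : ∫⁻ ω, ENNReal.ofReal (Real.exp (-α * Y ω)) ∂P
      = ENNReal.ofReal (Real.exp ((r - s) * α ^ 2 / 2)) := by
    rw [← lintegral_map hmh hY, hmapY, lintegral_exp_mul_gaussianReal]
    congr 2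
    rw [Real.coe_toNNReal _ (by linarith)]
    ring
  have h3 : ∫⁻ ω, f ω ∂P = ENNReal.ofReal (Real.exp (α' * a + α * b)) *
      (ENNReal.ofReal (Real.exp ((s - 0) * (α + α') ^ 2 / 2)) *
        ENNReal.ofReal (Real.exp ((r - s) * α ^ 2 / 2))) := by
    have hmXY : Measurable fun ω =>
        ENNReal.ofReal (Real.exp (-(α + α') * X ω)) * ENNReal.ofReal (Real.exp (-α * Y ω)) :=
      (hmg.comp hX).mul (hmh.comp hY)
    rw [lintegral_congr hsplit, lintegral_const_mul _ hmXY]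
    congr 1
    refine (lintegral_mul_eq_lintegral_mul_lintegral_of_indepFun''
      (hmg.comp hX).aemeasurable (hmh.comp hY).aemeasurable hindc).trans ?_
    simp only [Function.comp_apply]
    rw [hXint, hYint]
  -- Put everything together
  refine (h1.trans (h2.trans (le_of_eq ?_)))
  rw [h3, ← ENNReal.ofReal_mul (Real.exp_nonneg _), ← ENNReal.ofReal_mul (Real.exp_nonneg _),
    ← Real.exp_add, ← Real.exp_add, ← Real.exp_add]
  congr 1
  simp only [ha, hb]
  ring
end

section
/- Fix real constants $\alpha \ge 0$, $\tilde\alpha \le 0$, and $0 < s < r$, and let $F(u) = \alpha u + \tilde\alpha (u \wedge s)$. Let $B$ be a standard Brownian motion starting at $0$. Then for every $\beta \ge 0$, $\mathbb{P}\big(\sup_{u \in [0,r]} (B_u + F(u)) \le \beta\big) \le e^{-\frac{(\alpha+\tilde\alpha)^2 - \alpha^2 - \tilde\alpha^2}{2} s - \frac{\alpha^2}{2} r}\, e^{\alpha\beta}$. -/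
open MeasureTheory ProbabilityTheory Real
open scoped NNReal ENNReal

/-- Chernoff-type bound on the lower tail of a Gaussian. -/
lemma gaussianReal_Iic_le {v : ℝ≥0} (hv : v ≠ 0) (a ε : ℝ) (ha : 0 ≤ a) :
    gaussianReal 0 v (Set.Iic ε) ≤ ENNReal.ofReal (Real.exp (a * ε + a ^ 2 * v / 2)) := by
  have hv' : (v : ℝ) ≠ 0 := by exact_mod_cast hv
  have hfun : ∀ x : ℝ, Real.exp (a * (ε - x)) * gaussianPDFReal 0 v x
      = Real.exp (a * ε + a ^ 2 * v / 2) * gaussianPDFReal (-(a * v)) v x := by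
    intro x
    unfold gaussianPDFReal
    rw [mul_left_comm, mul_left_comm (Real.exp (a * ε + a ^ 2 * v / 2)), ← Real.exp_add,
      ← Real.exp_add]
    congr 1
    field_simp
    ring
  rw [gaussianReal_of_var_ne_zero _ hv, withDensity_apply _ measurableSet_Iic]
  calc ∫⁻ x in Set.Iic ε, gaussianPDF 0 v x
      ≤ ∫⁻ x in Set.Iic ε,
          ENNReal.ofReal (Real.exp (a * (ε - x)) * gaussianPDFReal 0 v x) := by
        refine setLIntegral_mono ?_ ?_
        · exact ((((measurable_const.sub measurable_id).const_mul a).exp).mul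
            (measurable_gaussianPDFReal 0 v)).ennreal_ofReal
        · intro x hx
          rw [gaussianPDF]
          refine ENNReal.ofReal_le_ofReal ?_
          nth_rewrite 1 [← one_mul (gaussianPDFReal 0 v x)]
          refine mul_le_mul_of_nonneg_right ?_ (gaussianPDFReal_nonneg 0 v x)
          rw [← Real.exp_zero]
          exact Real.exp_le_exp.2 (mul_nonneg ha (by simp at hx; linarith))
    _ ≤ ∫⁻ x, ENNReal.ofReal (Real.exp (a * (ε - x)) * gaussianPDFReal 0 v x) :=
        setLIntegral_le_lintegral _ _
    _ = ENNReal.ofReal (Real.exp (a * ε + a ^ 2 * v / 2)) := by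
        simp_rw [hfun, ENNReal.ofReal_mul (Real.exp_nonneg _)]
        rw [lintegral_const_mul _ (measurable_gaussianPDFReal _ _).ennreal_ofReal,
          lintegral_gaussianPDFReal_eq_one _ hv, mul_one]

/-- Let `α ≥ 0`, `α' ≤ 0`, `0 < s < r`, `F(u) = α u + α' (u ⊓ s)`, and let `B` be a
standard Brownian motion started at `0`. Then for every `β ≥ 0`,
`ℙ(sup_{u ∈ [0,r]} (B_u + F(u)) ≤ β) ≤ exp(-((α+α')² - α² - α'²)s/2 - α²r/2) · exp(αβ)`. -/
theorem brownian_piecewise_drift_sup_bound_negative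
    {Ω : Type*} [MeasurableSpace Ω] (P : Measure Ω) [IsProbabilityMeasure P]
    (B : ℝ → Ω → ℝ) (hB : IsStandardBM P B)
    (α α' s r : ℝ) (hα : 0 ≤ α) (hα' : α' ≤ 0) (hs : 0 < s) (hsr : s < r) (β : ℝ) (hβ : 0 ≤ β) :
    P {ω | ∀ u ∈ Set.Icc (0:ℝ) r, B u ω + (α * u + α' * min u s) ≤ β} ≤
      ENNReal.ofReal
        (Real.exp (-(((α + α') ^ 2 - α ^ 2 - α' ^ 2) / 2) * s - α ^ 2 / 2 * r)
          * Real.exp (α * β)) := by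
  have hr : 0 < r := hs.trans hsr
  set x : ℝ := β - α * r - α' * s with hx
  have hsub : {ω | ∀ u ∈ Set.Icc (0:ℝ) r, B u ω + (α * u + α' * min u s) ≤ β}
      ⊆ {ω | B r ω ≤ x} := by
    intro ω hω
    have h := hω r ⟨hr.le, le_rfl⟩
    have hmin : min r s = s := min_eq_right hsr.le
    rw [hmin] at h
    simp only [Set.mem_setOf_eq, hx]
    linarith
  refine le_trans (measure_mono hsub) ?_
  have heq : P {ω | B r ω ≤ x} = P {ω | B r ω - B 0 ω ≤ x} := by
    refine measure_congr ?_
    filter_upwards [hB.init] with ω h0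
    show (B r ω ≤ x) = (B r ω - B 0 ω ≤ x)
    rw [h0, sub_zero]
  rw [heq]
  have hmap : P {ω | B r ω - B 0 ω ≤ x}
      = gaussianReal 0 (Real.toNNReal (r - 0)) (Set.Iic x) := by
    rw [← hB.gauss 0 r le_rfl hr.le,
      Measure.map_apply (f := fun ω => B r ω - B 0 ω) ((hB.meas r).sub (hB.meas 0)) measurableSet_Iic]
    rfl
  rw [hmap]
  refine le_trans (gaussianReal_Iic_le (by simp [hr, hr.le, hr.ne']) α x hα) ?_
  have hcoe : ((Real.toNNReal (r - 0) : ℝ≥0) : ℝ) = r := by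
    rw [sub_zero, Real.coe_toNNReal _ hr.le]
  rw [hcoe, ← Real.exp_add]
  refine ENNReal.ofReal_le_ofReal (Real.exp_le_exp.2 (le_of_eq ?_))
  rw [hx]; ring
end

section
/- For real parameters $\alpha, \beta > 0$ with $\alpha + \beta < 1$, $\int_{\mathbb{R}^2} |z|^{2(\alpha-1)} |z-1|^{2(\beta-1)}\, d^2z = \pi\, \frac{l(\alpha)\, l(\beta)}{l(\alpha+\beta)}$, where $l(x) = \Gamma(x)/\Gamma(1-x)$ and $|z|$ denotes the Euclidean norm of $z \in \mathbb{R}^2 \cong \mathbb{C}$. -/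
open MeasureTheory Real Set Filter
open scoped ENNReal

/-- `l x = Γ(x) / Γ(1-x)`. -/
noncomputable def lGamma (x : ℝ) : ℝ := Real.Gamma x / Real.Gamma (1 - x)

lemma gauss_shift {b : ℝ} (hb : 0 < b) (c : ℝ) :
    ∫ x : ℝ, rexp (-(b * (x - c) ^ 2)) = Real.sqrt (π / b) := by
  rw [show (fun x : ℝ => rexp (-(b * (x - c) ^ 2))) = fun x => (fun y => rexp (-b * y ^ 2)) (x - c) by
    funext x; simp [neg_mul]]
  rw [integral_sub_right_eq_self (fun y : ℝ => rexp (-b * y ^ 2)) c, integral_gaussian]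

lemma gauss_shift_integrable {b : ℝ} (hb : 0 < b) (c : ℝ) :
    Integrable fun x : ℝ => rexp (-(b * (x - c) ^ 2)) := by
  have := (integrable_exp_neg_mul_sq hb).comp_sub_right c
  simpa [neg_mul] using this

lemma lint_gauss_shift {b : ℝ} (hb : 0 < b) (c : ℝ) :
    ∫⁻ x : ℝ, ENNReal.ofReal (rexp (-(b * (x - c) ^ 2))) = ENNReal.ofReal (Real.sqrt (π / b)) := by
  rw [← gauss_shift hb c]
  exact (ofReal_integral_eq_lintegral_ofReal (gauss_shift_integrable hb c)
    (Eventually.of_forall fun x => (exp_pos _).le)).symm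

lemma meas_gauss (b c : ℝ) :
    Measurable fun x : ℝ => ENNReal.ofReal (rexp (-(b * (x - c) ^ 2))) :=
  ((continuous_const.mul ((continuous_id.sub continuous_const).pow 2)).neg.rexp).measurable.ennreal_ofReal

lemma lint_gauss_complex {t s : ℝ} (ht : 0 < t) (hs : 0 < s) :
    ∫⁻ z : ℂ, ENNReal.ofReal (rexp (-(t * ‖z‖ ^ 2 + s * ‖z - 1‖ ^ 2))) =
      ENNReal.ofReal (π / (t + s) * rexp (-(t * s / (t + s)))) := by
  have hk : (0:ℝ) < t + s := by linarith
  have key : ∀ z : ℂ, t * ‖z‖ ^ 2 + s * ‖z - 1‖ ^ 2 =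
      t * s / (t + s) + ((t + s) * (z.re - s / (t + s)) ^ 2 + (t + s) * (z.im - 0) ^ 2) := by
    intro z
    rw [Complex.sq_norm, Complex.sq_norm, Complex.normSq_apply, Complex.normSq_apply,
      Complex.sub_re, Complex.sub_im, Complex.one_re, Complex.one_im]
    field_simp
    ring
  have hmre : Measurable fun z : ℂ =>
      ENNReal.ofReal (rexp (-((t + s) * (z.re - s / (t + s)) ^ 2))) :=
    (meas_gauss (t + s) (s / (t + s))).comp Complex.measurable_re
  have hmim : Measurable fun z : ℂ => ENNReal.ofReal (rexp (-((t + s) * (z.im - 0) ^ 2))) :=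
    (meas_gauss (t + s) 0).comp Complex.measurable_im
  simp only [key, Real.exp_add, neg_add, ENNReal.ofReal_mul (exp_pos _).le]
  rw [lintegral_const_mul _ (by exact hmre.mul hmim)]
  have hmp : MeasurePreserving (⇑Complex.measurableEquivRealProd) volume volume :=
    Complex.volume_preserving_equiv_real_prod
  have : ∫⁻ z : ℂ, ENNReal.ofReal (rexp (-((t + s) * (z.re - s / (t + s)) ^ 2))) *
        ENNReal.ofReal (rexp (-((t + s) * (z.im - 0) ^ 2))) =
      (∫⁻ x : ℝ, ENNReal.ofReal (rexp (-((t + s) * (x - s / (t + s)) ^ 2)))) *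
        ∫⁻ y : ℝ, ENNReal.ofReal (rexp (-((t + s) * (y - 0) ^ 2))) := by
    rw [← lintegral_prod_mul (meas_gauss (t + s) (s / (t + s))).aemeasurable
      (meas_gauss (t + s) 0).aemeasurable, ← Measure.volume_eq_prod]
    exact hmp.lintegral_comp
      (((meas_gauss (t + s) (s / (t + s))).comp measurable_fst).mul
        ((meas_gauss (t + s) 0).comp measurable_snd))
  rw [this, lint_gauss_shift hk, lint_gauss_shift hk,
    ← ENNReal.ofReal_mul (Real.sqrt_nonneg _), Real.mul_self_sqrt (by positivity),
    ← ENNReal.ofReal_mul (exp_pos _).le]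
  rw [mul_comm]

lemma lint_gamma {a r : ℝ} (ha : 0 < a) (hr : 0 < r) :
    ∫⁻ t in Ioi (0:ℝ), ENNReal.ofReal (t ^ (a - 1) * rexp (-(r * t))) =
      ENNReal.ofReal ((1 / r) ^ a * Gamma a) := by
  rw [← Real.integral_rpow_mul_exp_neg_mul_Ioi ha hr]
  refine (ofReal_integral_eq_lintegral_ofReal ?_ ?_).symm
  · have h := integrableOn_rpow_mul_exp_neg_mul_rpow (p := 1) (by linarith : (-1:ℝ) < a - 1) zero_lt_one hr
    simpa [Real.rpow_one, neg_mul, IntegrableOn] using h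
  · filter_upwards [self_mem_ae_restrict measurableSet_Ioi] with x hx
    have : (0:ℝ) < x := hx
    positivity

lemma pow_conv {r : ℝ} (hr : 0 < r) (c : ℝ) : (1 / r ^ 2) ^ (1 - c) = r ^ (2 * (c - 1)) := by
  rw [one_div, ← Real.rpow_natCast r 2, ← Real.rpow_neg hr.le, ← Real.rpow_mul hr.le]
  push_cast
  congr 1
  ring

lemma meas_gammaish (c w : ℝ) :
    Measurable fun t : ℝ => ENNReal.ofReal (t ^ c * rexp (-(w * t))) :=
  ((measurable_id.pow_const c).mul
    ((continuous_const.mul continuous_id).neg.rexp).measurable).ennreal_ofReal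

lemma step_z {α β : ℝ} (hα : 0 < α) (hα1 : α < 1) (hβ : 0 < β) (hβ1 : β < 1) {z : ℂ}
    (hz0 : z ≠ 0) (hz1 : z ≠ 1) :
    ∫⁻ s in Ioi (0:ℝ), ∫⁻ t in Ioi (0:ℝ),
      ENNReal.ofReal (t ^ ((1 - α) - 1) * rexp (-(‖z‖ ^ 2 * t))) *
        ENNReal.ofReal (s ^ ((1 - β) - 1) * rexp (-(‖z - 1‖ ^ 2 * s))) =
      ENNReal.ofReal (Gamma (1 - α) * Gamma (1 - β)) *
        ENNReal.ofReal (‖z‖ ^ (2 * (α - 1)) * ‖z - 1‖ ^ (2 * (β - 1))) := by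
  have hw1 : (0:ℝ) < ‖z‖ ^ 2 := by
    have : ‖z‖ ≠ 0 := by simpa using hz0
    positivity
  have hw2 : (0:ℝ) < ‖z - 1‖ ^ 2 := by
    have : ‖z - 1‖ ≠ 0 := by simpa [sub_eq_zero] using hz1
    positivity
  have hin : ∀ s : ℝ, ∫⁻ t in Ioi (0:ℝ),
      ENNReal.ofReal (t ^ ((1 - α) - 1) * rexp (-(‖z‖ ^ 2 * t))) *
        ENNReal.ofReal (s ^ ((1 - β) - 1) * rexp (-(‖z - 1‖ ^ 2 * s))) =
      ENNReal.ofReal ((1 / ‖z‖ ^ 2) ^ (1 - α) * Gamma (1 - α)) *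
        ENNReal.ofReal (s ^ ((1 - β) - 1) * rexp (-(‖z - 1‖ ^ 2 * s))) := by
    intro s
    rw [lintegral_mul_const _ (meas_gammaish _ _), lint_gamma (by linarith) hw1]
  simp only [hin]
  rw [lintegral_const_mul _ (meas_gammaish _ _), lint_gamma (by linarith) hw2]
  have hga : 0 < Gamma (1 - α) := Gamma_pos_of_pos (by linarith)
  have hgb : 0 < Gamma (1 - β) := Gamma_pos_of_pos (by linarith)
  rw [← ENNReal.ofReal_mul (mul_nonneg (Real.rpow_nonneg (by positivity) _) hga.le),
    ← ENNReal.ofReal_mul (mul_nonneg hga.le hgb.le)]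
  congr 1
  rw [pow_conv (norm_pos_iff.mpr hz0) α, pow_conv (norm_pos_iff.mpr (sub_ne_zero.mpr hz1)) β]
  ring

lemma lint_cov {s : Set ℝ} {f f' : ℝ → ℝ}
    (hs : MeasurableSet s) (hf' : ∀ x ∈ s, HasDerivWithinAt f (f' x) s x) (hf : Set.InjOn f s)
    (g : ℝ → ℝ≥0∞) :
    ∫⁻ x in f '' s, g x = ∫⁻ x in s, ENNReal.ofReal |f' x| * g (f x) := by
  simpa only [ContinuousLinearMap.det_toSpanSingleton] using
    MeasureTheory.lintegral_image_eq_lintegral_abs_det_fderiv_mul volume hs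
      (fun x hx => (hf' x hx).hasFDerivWithinAt) hf g

lemma real_beta {a b : ℝ} (ha : 0 < a) (hb : 0 < b) :
    ∫ x in (0:ℝ)..1, x ^ (a - 1) * (1 - x) ^ (b - 1) = Gamma a * Gamma b / Gamma (a + b) := by
  have key := Complex.Gamma_mul_Gamma_eq_betaIntegral
    (s := (a : ℂ)) (t := (b : ℂ)) (by simpa using ha) (by simpa using hb)
  have hbeta : Complex.betaIntegral (a : ℂ) (b : ℂ) =
      ((∫ x in (0:ℝ)..1, x ^ (a - 1) * (1 - x) ^ (b - 1) : ℝ) : ℂ) := by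
    rw [Complex.betaIntegral, ← intervalIntegral.integral_ofReal]
    refine intervalIntegral.integral_congr fun x hx => ?_
    rw [uIcc_of_le zero_le_one] at hx
    have hx0 : (0:ℝ) ≤ x := hx.1
    have hx1 : (0:ℝ) ≤ 1 - x := by linarith [hx.2]
    rw [Complex.ofReal_mul, Complex.ofReal_cpow hx0, Complex.ofReal_cpow hx1]
    push_cast
    ring
  rw [hbeta] at key
  have hG : Complex.Gamma (a:ℂ) * Complex.Gamma (b:ℂ) =
      ((Gamma a * Gamma b : ℝ) : ℂ) := by
    rw [Complex.Gamma_ofReal, Complex.Gamma_ofReal, ← Complex.ofReal_mul]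
  have hG2 : Complex.Gamma ((a:ℂ) + (b:ℂ)) = ((Gamma (a+b) : ℝ) : ℂ) := by
    rw [← Complex.ofReal_add, Complex.Gamma_ofReal]
  rw [hG, hG2, ← Complex.ofReal_mul] at key
  have := Complex.ofReal_inj.mp key
  have hpos : Gamma (a + b) ≠ 0 := (Gamma_pos_of_pos (by linarith)).ne'
  field_simp
  linarith [this]

lemma beta_integrableOn {a b : ℝ} (ha : 0 < a) (hb : 0 < b) :
    IntegrableOn (fun x : ℝ => x ^ (a - 1) * (1 - x) ^ (b - 1)) (Ioo 0 1) := by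
  have hc : IntervalIntegrable
      (fun x : ℝ => (x:ℂ) ^ ((a:ℂ) - 1) * ((1:ℂ) - (x:ℂ)) ^ ((b:ℂ) - 1)) volume 0 1 :=
    Complex.betaIntegral_convergent (by simpa using ha) (by simpa using hb)
  have h2 := ((intervalIntegrable_iff_integrableOn_Ioc_of_le zero_le_one).mp hc.norm).mono_set
    Ioo_subset_Ioc_self
  refine h2.congr_fun (fun x hx => ?_) measurableSet_Ioo
  have hx0 : (0:ℝ) < x := hx.1
  have hx1 : (0:ℝ) < 1 - x := by linarith [hx.2]
  simp only [norm_mul]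
  rw [show ((1:ℂ) - (x:ℂ)) = (((1 - x : ℝ)):ℂ) by push_cast; ring,
    Complex.norm_cpow_eq_rpow_re_of_pos hx0, Complex.norm_cpow_eq_rpow_re_of_pos hx1]
  norm_num

lemma lint_beta {a b : ℝ} (ha : 0 < a) (hb : 0 < b) :
    ∫⁻ x in Ioo (0:ℝ) 1, ENNReal.ofReal (x ^ (a - 1) * (1 - x) ^ (b - 1)) =
      ENNReal.ofReal (Gamma a * Gamma b / Gamma (a + b)) := by
  rw [← real_beta ha hb, intervalIntegral.integral_of_le zero_le_one,
    MeasureTheory.integral_Ioc_eq_integral_Ioo]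
  refine (ofReal_integral_eq_lintegral_ofReal (beta_integrableOn ha hb) ?_).symm
  filter_upwards [self_mem_ae_restrict measurableSet_Ioo] with x hx
  have hx0 : (0:ℝ) < x := hx.1
  have hx1 : (0:ℝ) < 1 - x := by linarith [hx.2]
  positivity

lemma image_Ioo_div : (fun u : ℝ => u / (1 - u)) '' Ioo 0 1 = Ioi 0 := by
  ext v
  constructor
  · rintro ⟨u, hu, rfl⟩
    have h1 : 0 < 1 - u := by linarith [hu.2]
    exact div_pos hu.1 h1
  · intro hv
    have hv0 : (0:ℝ) < v := hv
    refine ⟨v / (1 + v), ⟨by positivity, ?_⟩, ?_⟩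
    · rw [div_lt_one (by positivity)]; linarith
    · show v / (1 + v) / (1 - v / (1 + v)) = v
      have h1 : 1 - v / (1 + v) = 1 / (1 + v) := by field_simp; ring
      rw [h1]
      field_simp

lemma lint_beta_Ioi {a b : ℝ} (ha : 0 < a) (hb : 0 < b) :
    ∫⁻ v in Ioi (0:ℝ), ENNReal.ofReal (v ^ (b - 1) * (1 + v) ^ (-(a + b))) =
      ENNReal.ofReal (Gamma a * Gamma b / Gamma (a + b)) := by
  have hderiv : ∀ u ∈ Ioo (0:ℝ) 1,
      HasDerivWithinAt (fun u : ℝ => u / (1 - u)) (((1 - u) ^ 2)⁻¹) (Ioo 0 1) u := by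
    intro u hu
    have h1 : (1:ℝ) - u ≠ 0 := by have := hu.2; intro h; linarith
    have := (hasDerivAt_id u).div ((hasDerivAt_id u).const_sub 1) h1
    have e : ((1 * (1 - id u) - id u * -1) / (1 - id u) ^ 2 : ℝ) = ((1 - u) ^ 2)⁻¹ := by
      simp only [id_eq]; ring
    rw [e] at this
    exact this.hasDerivWithinAt
  have hinj : Set.InjOn (fun u : ℝ => u / (1 - u)) (Ioo 0 1) := by
    intro u hu w hw h
    have hu1 : (1:ℝ) - u ≠ 0 := by have := hu.2; intro hc; linarith
    have hw1 : (1:ℝ) - w ≠ 0 := by have := hw.2; intro hc; linarith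
    field_simp at h
    linarith
  rw [← image_Ioo_div, lint_cov measurableSet_Ioo hderiv hinj]
  have hcong : ∀ u ∈ Ioo (0:ℝ) 1,
      ENNReal.ofReal |((1 - u) ^ 2)⁻¹| *
        ENNReal.ofReal ((u / (1 - u)) ^ (b - 1) * (1 + u / (1 - u)) ^ (-(a + b))) =
      ENNReal.ofReal (u ^ (b - 1) * (1 - u) ^ (a - 1)) := by
    intro u hu
    have hu0 : (0:ℝ) < u := hu.1
    have hw : (0:ℝ) < 1 - u := by linarith [hu.2]
    rw [← ENNReal.ofReal_mul (abs_nonneg _)]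
    congr 1
    have h1 : 1 + u / (1 - u) = (1 - u)⁻¹ := by field_simp; ring
    rw [h1, abs_of_pos (by positivity), Real.inv_rpow hw.le, ← Real.rpow_neg hw.le, neg_neg,
      Real.div_rpow hu0.le hw.le, div_eq_mul_inv, ← Real.rpow_neg hw.le,
      ← Real.rpow_natCast (1 - u) 2, ← Real.rpow_neg hw.le]
    push_cast
    rw [show (((1-u) ^ (-(2:ℝ)) * (u ^ (b-1) * (1-u) ^ (-(b-1)) * (1-u) ^ (a+b))) : ℝ)
        = u ^ (b-1) * ((1-u) ^ (-(2:ℝ)) * (1-u) ^ (-(b-1)) * (1-u) ^ (a+b)) by ring,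
      ← Real.rpow_add hw, ← Real.rpow_add hw]
    congr 1
    ring
  rw [setLIntegral_congr_fun measurableSet_Ioo hcong]
  rw [lint_beta hb ha]
  rw [mul_comm (Gamma b), add_comm b a]

lemma meas_phi (c1 c2 : ℝ) :
    Measurable fun q : (ℂ × ℝ) × ℝ =>
      ENNReal.ofReal (q.2 ^ c1 * rexp (-(‖q.1.1‖ ^ 2 * q.2))) *
        ENNReal.ofReal (q.1.2 ^ c2 * rexp (-(‖q.1.1 - 1‖ ^ 2 * q.1.2))) := by
  have h1 : Continuous fun q : (ℂ × ℝ) × ℝ => rexp (-(‖q.1.1‖ ^ 2 * q.2)) :=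
    (((continuous_norm.comp (continuous_fst.comp continuous_fst)).pow 2).mul
      continuous_snd).neg.rexp
  have h2 : Continuous fun q : (ℂ × ℝ) × ℝ => rexp (-(‖q.1.1 - 1‖ ^ 2 * q.1.2)) :=
    (((continuous_norm.comp ((continuous_fst.comp continuous_fst).sub
      continuous_const)).pow 2).mul (continuous_snd.comp continuous_fst)).neg.rexp
  exact (((measurable_snd.pow_const c1).mul h1.measurable).ennreal_ofReal).mul
    (((measurable_fst.snd.pow_const c2).mul h2.measurable).ennreal_ofReal)

lemma step_T {α β : ℝ} :
    ∫⁻ z : ℂ, ∫⁻ s in Ioi (0:ℝ), ∫⁻ t in Ioi (0:ℝ),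
      ENNReal.ofReal (t ^ ((1 - α) - 1) * rexp (-(‖z‖ ^ 2 * t))) *
        ENNReal.ofReal (s ^ ((1 - β) - 1) * rexp (-(‖z - 1‖ ^ 2 * s))) =
      ∫⁻ s in Ioi (0:ℝ), ∫⁻ t in Ioi (0:ℝ),
        ENNReal.ofReal (t ^ ((1 - α) - 1) * s ^ ((1 - β) - 1) *
          (π / (t + s) * rexp (-(t * s / (t + s))))) := by
  have mΦ := meas_phi ((1 - α) - 1) ((1 - β) - 1)
  rw [lintegral_lintegral_swap (mΦ.lintegral_prod_right').aemeasurable]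
  refine setLIntegral_congr_fun measurableSet_Ioi (fun s hs => ?_)
  have hs' : (0:ℝ) < s := hs
  have swap2 : ∫⁻ z : ℂ, ∫⁻ t in Ioi (0:ℝ),
      ENNReal.ofReal (t ^ ((1 - α) - 1) * rexp (-(‖z‖ ^ 2 * t))) *
        ENNReal.ofReal (s ^ ((1 - β) - 1) * rexp (-(‖z - 1‖ ^ 2 * s))) =
      ∫⁻ t in Ioi (0:ℝ), ∫⁻ z : ℂ,
      ENNReal.ofReal (t ^ ((1 - α) - 1) * rexp (-(‖z‖ ^ 2 * t))) *
        ENNReal.ofReal (s ^ ((1 - β) - 1) * rexp (-(‖z - 1‖ ^ 2 * s))) := by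
    refine lintegral_lintegral_swap ?_
    exact (mΦ.comp (((measurable_fst.prodMk measurable_const).prodMk
      measurable_snd) : Measurable fun p : ℂ × ℝ => ((p.1, s), p.2))).aemeasurable
  rw [swap2]
  refine setLIntegral_congr_fun measurableSet_Ioi (fun t ht => ?_)
  have ht' : (0:ℝ) < t := ht
  have key : ∀ z : ℂ,
      ENNReal.ofReal (t ^ ((1 - α) - 1) * rexp (-(‖z‖ ^ 2 * t))) *
        ENNReal.ofReal (s ^ ((1 - β) - 1) * rexp (-(‖z - 1‖ ^ 2 * s))) =
      ENNReal.ofReal (t ^ ((1 - α) - 1) * s ^ ((1 - β) - 1)) *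
        ENNReal.ofReal (rexp (-(t * ‖z‖ ^ 2 + s * ‖z - 1‖ ^ 2))) := by
    intro z
    rw [← ENNReal.ofReal_mul (mul_nonneg (Real.rpow_nonneg ht'.le _) (exp_pos _).le),
      ← ENNReal.ofReal_mul (mul_nonneg (Real.rpow_nonneg ht'.le _) (Real.rpow_nonneg hs'.le _))]
    congr 1
    have he : rexp (-(‖z‖ ^ 2 * t)) * rexp (-(‖z - 1‖ ^ 2 * s)) =
        rexp (-(t * ‖z‖ ^ 2 + s * ‖z - 1‖ ^ 2)) := by
      rw [← Real.exp_add]; congr 1; ring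
    calc t ^ ((1 - α) - 1) * rexp (-(‖z‖ ^ 2 * t)) *
          (s ^ ((1 - β) - 1) * rexp (-(‖z - 1‖ ^ 2 * s)))
        = t ^ ((1 - α) - 1) * s ^ ((1 - β) - 1) *
          (rexp (-(‖z‖ ^ 2 * t)) * rexp (-(‖z - 1‖ ^ 2 * s))) := by ring
      _ = _ := by rw [he]
  simp only [key]
  rw [lintegral_const_mul _ (by
    exact (((continuous_const.mul (continuous_norm.pow 2)).add
      (continuous_const.mul (((continuous_norm.comp
        (continuous_id.sub continuous_const))).pow 2))).neg.rexp).measurable.ennreal_ofReal), lint_gauss_complex ht' hs',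
    ← ENNReal.ofReal_mul (mul_nonneg (Real.rpow_nonneg ht'.le _) (Real.rpow_nonneg hs'.le _))]

lemma image_mul_Ioi {s : ℝ} (hs : 0 < s) : (fun v : ℝ => s * v) '' Ioi 0 = Ioi 0 := by
  ext x
  constructor
  · rintro ⟨v, hv, rfl⟩; exact mul_pos hs hv
  · intro hx
    exact ⟨x / s, div_pos hx hs, by field_simp⟩

lemma step_CD {α β : ℝ} (hα : 0 < α) (hβ : 0 < β) (hαβ : α + β < 1) :
    ∫⁻ s in Ioi (0:ℝ), ∫⁻ t in Ioi (0:ℝ),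
        ENNReal.ofReal (t ^ ((1 - α) - 1) * s ^ ((1 - β) - 1) *
          (π / (t + s) * rexp (-(t * s / (t + s))))) =
      ENNReal.ofReal π * ENNReal.ofReal (Gamma (1 - α - β)) *
        ENNReal.ofReal (Gamma α * Gamma β / Gamma (α + β)) := by
  have hc1 : (0:ℝ) < 1 - α - β := by linarith
  -- Step C : substitute t = s * v
  have stepC : ∀ s : ℝ, s ∈ Ioi (0:ℝ) → (∫⁻ t in Ioi (0:ℝ),
      ENNReal.ofReal (t ^ ((1 - α) - 1) * s ^ ((1 - β) - 1) *
        (π / (t + s) * rexp (-(t * s / (t + s)))))) =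
      ∫⁻ v in Ioi (0:ℝ), ENNReal.ofReal (π * (v ^ (-α) * (1 + v)⁻¹)) *
        ENNReal.ofReal (s ^ ((1 - α - β) - 1) * rexp (-(v / (1 + v) * s))) := by
    intro s hs
    have hs' : (0:ℝ) < s := hs
    have hderiv : ∀ v ∈ Ioi (0:ℝ), HasDerivWithinAt (fun v : ℝ => s * v) s (Ioi 0) v :=
      fun v _ => by simpa using ((hasDerivAt_id v).const_mul s).hasDerivWithinAt
    have hinj : Set.InjOn (fun v : ℝ => s * v) (Ioi 0) :=
      fun u _ w _ h => mul_left_cancel₀ hs'.ne' h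
    have hcv := lint_cov measurableSet_Ioi hderiv hinj
      (fun t => ENNReal.ofReal (t ^ ((1 - α) - 1) * s ^ ((1 - β) - 1) *
        (π / (t + s) * rexp (-(t * s / (t + s))))))
    rw [image_mul_Ioi hs'] at hcv
    rw [hcv]
    refine setLIntegral_congr_fun measurableSet_Ioi (fun v hv => ?_)
    have hv' : (0:ℝ) < v := hv
    have h1v : (0:ℝ) < 1 + v := by linarith
    rw [← ENNReal.ofReal_mul (abs_nonneg s),
      ← ENNReal.ofReal_mul (by positivity)]
    congr 1
    have harg : s * v * s / (s * v + s) = v / (1 + v) * s := by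
      rw [show s * v + s = s * (1 + v) by ring]
      field_simp
    rw [abs_of_pos hs', harg, Real.mul_rpow hs'.le hv'.le,
      show s * v + s = s * (1 + v) by ring,
      show π / (s * (1 + v)) = π * s⁻¹ * (1 + v)⁻¹ by rw [div_eq_mul_inv, mul_inv]; ring,
      show ((1:ℝ) - α - β) - 1 = -α + -β by ring, Real.rpow_add hs',
      show ((1:ℝ) - α) - 1 = -α by ring, show ((1:ℝ) - β) - 1 = -β by ring]
    field_simp
  rw [setLIntegral_congr_fun measurableSet_Ioi stepC]
  -- Step D : swap s and v, integrate over s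
  have hmf2 : Measurable fun p : ℝ × ℝ =>
      ENNReal.ofReal (π * (p.2 ^ (-α) * (1 + p.2)⁻¹)) *
        ENNReal.ofReal (p.1 ^ ((1 - α - β) - 1) * rexp (-(p.2 / (1 + p.2) * p.1))) := by
    refine Measurable.mul (f := fun p : ℝ × ℝ => ENNReal.ofReal (π * (p.2 ^ (-α) * (1 + p.2)⁻¹))) (g := fun p : ℝ × ℝ => ENNReal.ofReal (p.1 ^ ((1 - α - β) - 1) * rexp (-(p.2 / (1 + p.2) * p.1)))) ?_ ?_
    · exact (measurable_const.mul ((measurable_snd.pow_const _).mul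
        ((measurable_const.add measurable_snd).inv))).ennreal_ofReal
    · exact ((measurable_fst.pow_const _).mul
        (((((measurable_snd.div (measurable_const.add measurable_snd)).mul
          measurable_fst)).neg).exp)).ennreal_ofReal
  rw [lintegral_lintegral_swap hmf2.aemeasurable]
  have stepD : ∀ v : ℝ, v ∈ Ioi (0:ℝ) → (∫⁻ s in Ioi (0:ℝ),
      ENNReal.ofReal (π * (v ^ (-α) * (1 + v)⁻¹)) *
        ENNReal.ofReal (s ^ ((1 - α - β) - 1) * rexp (-(v / (1 + v) * s)))) =
      ENNReal.ofReal π * ENNReal.ofReal (Gamma (1 - α - β)) *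
        ENNReal.ofReal (v ^ (β - 1) * (1 + v) ^ (-(α + β))) := by
    intro v hv
    have hv' : (0:ℝ) < v := hv
    have h1v : (0:ℝ) < 1 + v := by linarith
    have hr : (0:ℝ) < v / (1 + v) := by positivity
    rw [lintegral_const_mul _ (by exact ((measurable_id'.pow_const _).mul
      (((measurable_const.mul measurable_id').neg).exp)).ennreal_ofReal),
      lint_gamma hc1 hr]
    rw [← ENNReal.ofReal_mul (by positivity), ← ENNReal.ofReal_mul Real.pi_pos.le,
      ← ENNReal.ofReal_mul (by positivity)]
    congr 1
    have key : (1 / (v / (1 + v))) ^ (1 - α - β) = (1 + v) ^ (1 - α - β) * v ^ (-(1 - α - β)) := by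
      rw [one_div, inv_div, Real.div_rpow h1v.le hv'.le, div_eq_mul_inv, ← Real.rpow_neg hv'.le]
    have key2 : (1 + v)⁻¹ = (1 + v) ^ (-1 : ℝ) := (Real.rpow_neg_one _).symm
    have e1 : v ^ (β - 1) = v ^ (-α) * v ^ (-(1 - α - β)) := by
      rw [← Real.rpow_add hv']; congr 1; ring
    have e2 : (1 + v) ^ (-(α + β)) = (1 + v) ^ (-1 : ℝ) * (1 + v) ^ (1 - α - β) := by
      rw [← Real.rpow_add h1v]; congr 1; ring
    rw [key, key2, e1, e2]
    ring
  rw [setLIntegral_congr_fun measurableSet_Ioi stepD]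
  rw [lintegral_const_mul _ (by exact ((measurable_id'.pow_const _).mul
    ((measurable_const.add measurable_id').pow_const _)).ennreal_ofReal),
    lint_beta_Ioi hα hβ]

/-- For `α, β > 0` with `α + β < 1`,
`∫_{ℝ²} |z|^{2(α-1)} |z-1|^{2(β-1)} d²z = π · l(α) l(β) / l(α+β)`. -/
theorem selberg_integral_plane (α β : ℝ) (hα : 0 < α) (hβ : 0 < β) (hαβ : α + β < 1) :
    Integrable (fun z : ℂ => ‖z‖ ^ (2 * (α - 1)) * ‖z - 1‖ ^ (2 * (β - 1))) ∧
    ∫ z : ℂ, ‖z‖ ^ (2 * (α - 1)) * ‖z - 1‖ ^ (2 * (β - 1)) =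
      π * (lGamma α * lGamma β / lGamma (α + β)) := by
  have hα1 : α < 1 := by linarith
  have hβ1 : β < 1 := by linarith
  have hc1 : (0:ℝ) < 1 - α - β := by linarith
  set F : ℂ → ℝ := fun z =>
    ‖z‖ ^ (2 * (α - 1)) * ‖z - 1‖ ^ (2 * (β - 1)) with hF
  have hF_meas : Measurable F :=
    (continuous_norm.measurable.pow_const _).mul
      (((continuous_norm.comp (continuous_id.sub continuous_const)).measurable).pow_const _)
  have hF_nonneg : 0 ≤ᵐ[volume] F :=
    Eventually.of_forall fun z => mul_nonneg (Real.rpow_nonneg (norm_nonneg _) _)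
      (Real.rpow_nonneg (norm_nonneg _) _)
  -- the key Lebesgue-integral identity
  set C : ℝ := Gamma (1 - α) * Gamma (1 - β) with hCdef
  have hCpos : 0 < C := mul_pos (Gamma_pos_of_pos (by linarith)) (Gamma_pos_of_pos (by linarith))
  have hae : ∀ᵐ z : ℂ, z ≠ 0 ∧ z ≠ 1 := by
    have h0 : ∀ᵐ z : ℂ, z ≠ 0 := by
      rw [ae_iff]
      simpa [not_not] using measure_singleton (0:ℂ)
    have h1 : ∀ᵐ z : ℂ, z ≠ 1 := by
      rw [ae_iff]
      simpa [not_not] using measure_singleton (1:ℂ)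
    exact h0.and h1
  have hstep : ∫⁻ z : ℂ, ∫⁻ s in Ioi (0:ℝ), ∫⁻ t in Ioi (0:ℝ),
      ENNReal.ofReal (t ^ ((1 - α) - 1) * rexp (-(‖z‖ ^ 2 * t))) *
        ENNReal.ofReal (s ^ ((1 - β) - 1) * rexp (-(‖z - 1‖ ^ 2 * s))) =
      ENNReal.ofReal C * ∫⁻ z : ℂ, ENNReal.ofReal (F z) := by
    rw [← lintegral_const_mul _ hF_meas.ennreal_ofReal]
    refine lintegral_congr_ae ?_
    filter_upwards [hae] with z hz
    exact step_z hα hα1 hβ hβ1 hz.1 hz.2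
  have hval : ∫⁻ z : ℂ, ∫⁻ s in Ioi (0:ℝ), ∫⁻ t in Ioi (0:ℝ),
      ENNReal.ofReal (t ^ ((1 - α) - 1) * rexp (-(‖z‖ ^ 2 * t))) *
        ENNReal.ofReal (s ^ ((1 - β) - 1) * rexp (-(‖z - 1‖ ^ 2 * s))) =
      ENNReal.ofReal π * ENNReal.ofReal (Gamma (1 - α - β)) *
        ENNReal.ofReal (Gamma α * Gamma β / Gamma (α + β)) := by
    rw [step_T, step_CD hα hβ hαβ]
  set V : ℝ := π * (lGamma α * lGamma β / lGamma (α + β)) with hVdef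
  have hVpos : 0 < V := by
    have h1 : 0 < lGamma α := div_pos (Gamma_pos_of_pos hα) (Gamma_pos_of_pos (by linarith))
    have h2 : 0 < lGamma β := div_pos (Gamma_pos_of_pos hβ) (Gamma_pos_of_pos (by linarith))
    have h3 : 0 < lGamma (α + β) := div_pos (Gamma_pos_of_pos (by linarith))
      (Gamma_pos_of_pos (by linarith))
    exact mul_pos pi_pos (div_pos (mul_pos h1 h2) h3)
  have hCV : C * V = π * Gamma (1 - α - β) * (Gamma α * Gamma β / Gamma (α + β)) := by
    have g1 : Gamma (1 - α) ≠ 0 := (Gamma_pos_of_pos (by linarith)).ne'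
    have g2 : Gamma (1 - β) ≠ 0 := (Gamma_pos_of_pos (by linarith)).ne'
    have g3 : Gamma (α + β) ≠ 0 := (Gamma_pos_of_pos (by linarith)).ne'
    have g4 : Gamma (1 - (α + β)) ≠ 0 := (Gamma_pos_of_pos (by linarith)).ne'
    have e : (1:ℝ) - (α + β) = 1 - α - β := by ring
    simp only [hVdef, hCdef, lGamma, e]
    field_simp
  have hK : ∫⁻ z : ℂ, ENNReal.ofReal (F z) = ENNReal.ofReal V := by
    have hmain : ENNReal.ofReal C * ∫⁻ z : ℂ, ENNReal.ofReal (F z) =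
        ENNReal.ofReal C * ENNReal.ofReal V := by
      rw [← hstep, hval, ← ENNReal.ofReal_mul hCpos.le, hCV,
        ← ENNReal.ofReal_mul (by positivity), ← ENNReal.ofReal_mul
          (mul_nonneg pi_pos.le (Gamma_pos_of_pos hc1).le)]
    exact (ENNReal.mul_right_inj (ENNReal.ofReal_pos.mpr hCpos).ne'
      ENNReal.ofReal_ne_top).mp hmain
  have hint : Integrable F := by
    refine ⟨hF_meas.aestronglyMeasurable, ?_⟩
    rw [hasFiniteIntegral_iff_ofReal hF_nonneg, hK]
    exact ENNReal.ofReal_lt_top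
  refine ⟨hint, ?_⟩
  rw [show (∫ z : ℂ, ‖z‖ ^ (2 * (α - 1)) * ‖z - 1‖ ^ (2 * (β - 1))) =
    ∫ z : ℂ, F z from rfl]
  rw [integral_eq_lintegral_of_nonneg_ae hF_nonneg hF_meas.aestronglyMeasurable, hK,
    ENNReal.toReal_ofReal hVpos.le]
end

section
/- The function $F(\alpha,\beta) := \int_{\mathbb{R}^2} |z|^{2(\alpha-1)}\big(|z-1|^{2(\beta-1)} - \mathbf{1}_{\{|z|\ge 1\}} |z|^{2(\beta-1)}\big)\, d^2z - \frac{\pi}{\alpha+\beta-1}$ is well defined (the integral converges absolutely) for all $\alpha, \beta > 0$ with $\alpha + \beta \in (0, 3/2) \setminus \{1\}$. -/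
open MeasureTheory Real Set


private lemma rpow_le_c_pow_abs {t c q : ℝ} (hc : 1 ≤ c) (h1 : c⁻¹ ≤ t) (h2 : t ≤ c) :
    t ^ q ≤ c ^ |q| := by
  have hc0 : (0:ℝ) < c := lt_of_lt_of_le one_pos hc
  have ht : (0:ℝ) < t := lt_of_lt_of_le (by positivity) h1
  rcases le_or_gt 0 q with hq | hq
  · rw [abs_of_nonneg hq]; exact Real.rpow_le_rpow ht.le h2 hq
  · rw [abs_of_neg hq]
    calc t ^ q ≤ (c⁻¹) ^ q := Real.rpow_le_rpow_of_nonpos (by positivity) h1 hq.le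
    _ = c ^ (-q) := by
        rw [Real.inv_rpow hc0.le, ← Real.rpow_neg hc0.le]

private lemma rpow_sub_rpow_bound {q u v : ℝ} (hq : q ≤ 1) (hu : 1 ≤ u) (huv : u ≤ v) :
    |v ^ q - u ^ q| ≤ |q| * u ^ (q - 1) * (v - u) := by
  have hu0 : (0:ℝ) < u := lt_of_lt_of_le one_pos hu
  rcases eq_or_lt_of_le huv with rfl | hlt
  · simp
  · obtain ⟨c, hc, hc'⟩ := exists_hasDerivAt_eq_slope (fun t => t ^ q)
      (fun t => q * t ^ (q - 1)) hlt
      ((continuousOn_id.rpow_const fun x hx => Or.inl (by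
          have : (1:ℝ) ≤ x := le_trans hu hx.1
          exact (lt_of_lt_of_le one_pos this).ne')))
      (fun x hx => Real.hasDerivAt_rpow_const (Or.inl (by
          have : u < x := hx.1
          exact (lt_trans hu0 this).ne')))
    have hev : v ^ q - u ^ q = q * c ^ (q - 1) * (v - u) := by
      rw [hc', div_mul_cancel₀ _ (by linarith : v - u ≠ 0)]
    rw [hev, abs_mul, abs_mul, abs_of_nonneg (by linarith : (0:ℝ) ≤ v - u)]
    have hcu : u ≤ c := hc.1.le
    have h1 : |c ^ (q - 1)| ≤ u ^ (q - 1) := by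
      rw [abs_of_nonneg (Real.rpow_nonneg (by linarith) _)]
      exact Real.rpow_le_rpow_of_nonpos hu0 hcu (by linarith)
    exact mul_le_mul_of_nonneg_right
      (mul_le_mul_of_nonneg_left h1 (abs_nonneg q)) (by linarith)


private lemma integrableOn_abs_rpow_closedBall {a : ℝ} (ha : -2 < a) (R : ℝ) :
    IntegrableOn (fun z : ℂ => ‖z‖ ^ a) (Metric.closedBall 0 R) := by
  have hmeas : Measurable (fun z : ℂ => ‖z‖ ^ a) := by
    fun_prop
  have hnn : ∀ z : ℂ, 0 ≤ ‖z‖ ^ a := fun z => Real.rpow_nonneg (norm_nonneg z) a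
  rcases le_or_gt 0 a with h | h
  · exact (continuous_norm.rpow_const (fun x => Or.inr h)).continuousOn.integrableOn_compact
      (isCompact_closedBall 0 R)
  · have ha0 : a ≠ 0 := h.ne
    refine ⟨hmeas.aestronglyMeasurable, ?_⟩
    rw [hasFiniteIntegral_iff_ofReal (Filter.Eventually.of_forall hnn)]
    rw [lintegral_eq_lintegral_meas_le _ (Filter.Eventually.of_forall hnn) hmeas.aemeasurable]
    set μ := (volume : Measure ℂ).restrict (Metric.closedBall 0 R)
    set f := fun t : ℝ => μ {z : ℂ | t ≤ ‖z‖ ^ a}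
    have hsub : ∀ t : ℝ, 0 < t →
        {z : ℂ | t ≤ ‖z‖ ^ a} ⊆ Metric.closedBall 0 (t ^ a⁻¹) := by
      intro t ht z hz
      simp only [mem_setOf_eq] at hz
      have hz0 : 0 < ‖z‖ := by
        rcases eq_or_lt_of_le (norm_nonneg z) with h0 | h0
        · rw [← h0, Real.zero_rpow ha0] at hz; linarith
        · exact h0
      rw [Metric.mem_closedBall, Complex.dist_eq, sub_zero]
      exact (Real.le_rpow_inv_iff_of_neg hz0 ht h).mpr hz
    calc ∫⁻ t in Ioi 0, f t
        ≤ ∫⁻ t in Ioc 0 1 ∪ Ioi 1, f t := lintegral_mono_set Ioi_subset_Ioc_union_Ioi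
      _ ≤ (∫⁻ t in Ioc 0 1, f t) + ∫⁻ t in Ioi 1, f t := lintegral_union_le _ _ _
      _ < ⊤ := by
          refine ENNReal.add_lt_top.2 ⟨?_, ?_⟩
          · have hb : ∀ t ∈ Ioc (0:ℝ) 1, f t ≤ volume (Metric.closedBall (0:ℂ) R) := by
              intro t _
              exact le_trans (measure_mono (subset_univ _))
                (by rw [Measure.restrict_apply_univ])
            calc ∫⁻ t in Ioc (0:ℝ) 1, f t
                ≤ ∫⁻ _ in Ioc (0:ℝ) 1, volume (Metric.closedBall (0:ℂ) R) :=
                  setLIntegral_mono' measurableSet_Ioc hb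
              _ = volume (Metric.closedBall (0:ℂ) R) * volume (Ioc (0:ℝ) 1) :=
                  setLIntegral_const _ _
              _ < ⊤ := ENNReal.mul_lt_top measure_closedBall_lt_top (by simp)
          · have hq : a⁻¹ * 2 < -1 := by
              rw [inv_mul_eq_div, div_lt_iff_of_neg h]; linarith
            have hb : ∀ t ∈ Ioi (1:ℝ), f t ≤
                ENNReal.ofReal (t ^ (a⁻¹ * 2)) * NNReal.pi := by
              intro t ht
              have ht0 : (0:ℝ) < t := lt_trans one_pos ht
              calc f t ≤ volume {z : ℂ | t ≤ ‖z‖ ^ a} :=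
                    Measure.restrict_apply_le _ _
                _ ≤ volume (Metric.closedBall (0:ℂ) (t ^ a⁻¹)) :=
                    measure_mono (hsub t ht0)
                _ = ENNReal.ofReal (t ^ a⁻¹) ^ 2 * NNReal.pi := Complex.volume_closedBall _ _
                _ = ENNReal.ofReal (t ^ (a⁻¹ * 2)) * NNReal.pi := by
                    rw [← ENNReal.ofReal_pow (Real.rpow_nonneg ht0.le _),
                      ← Real.rpow_natCast (t ^ a⁻¹) 2, ← Real.rpow_mul ht0.le]
                    norm_num
            calc ∫⁻ t in Ioi (1:ℝ), f t
                ≤ ∫⁻ t in Ioi (1:ℝ), ENNReal.ofReal (t ^ (a⁻¹ * 2)) * NNReal.pi :=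
                  setLIntegral_mono' measurableSet_Ioi hb
              _ = (∫⁻ t in Ioi (1:ℝ), ENNReal.ofReal (t ^ (a⁻¹ * 2))) * NNReal.pi :=
                  lintegral_mul_const' _ _ ENNReal.coe_ne_top
              _ < ⊤ := ENNReal.mul_lt_top
                  ((integrableOn_Ioi_rpow_of_lt hq one_pos).setLIntegral_lt_top)
                  ENNReal.coe_lt_top


private lemma integrableOn_abs_sub_one_rpow_closedBall {b : ℝ} (hb : -2 < b) (R : ℝ) :
    IntegrableOn (fun z : ℂ => ‖z - 1‖ ^ b) (Metric.closedBall 1 R) := by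
  have h := (measurePreserving_add_right (volume : Measure ℂ) 1)
  rw [← h.integrableOn_comp_preimage (Homeomorph.addRight (1:ℂ)).measurableEmbedding]
  have hpre : (· + (1:ℂ)) ⁻¹' Metric.closedBall 1 R = Metric.closedBall 0 R := by
    ext z
    simp [Metric.mem_closedBall, Complex.dist_eq]
  rw [hpre]
  have : ((fun z : ℂ => ‖z - 1‖ ^ b) ∘ (· + (1:ℂ)))
      = fun z : ℂ => ‖z‖ ^ b := by
    ext z; simp [Function.comp]
  rw [this]
  exact integrableOn_abs_rpow_closedBall hb R

private lemma integrableOn_abs_rpow_atTop {p : ℝ} (hp : p < -2) :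
    IntegrableOn (fun z : ℂ => ‖z‖ ^ p) {z : ℂ | 2 ≤ ‖z‖} := by
  have hS : MeasurableSet {z : ℂ | 2 ≤ ‖z‖} :=
    measurableSet_le measurable_const continuous_norm.measurable
  have hint : Integrable (fun z : ℂ => (1 + ‖z‖) ^ p) := by
    have := integrable_one_add_norm (E := ℂ) (μ := volume) (r := -p)
      (by rw [Complex.finrank_real_complex]; norm_num; linarith)
    simpa using this
  have hmeas : Measurable (fun z : ℂ => ‖z‖ ^ p) := by
    fun_prop
  refine Integrable.mono' ((hint.const_mul ((2:ℝ) ^ (-p))).integrableOn) hmeas.aestronglyMeasurable ?_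
  filter_upwards [ae_restrict_mem hS] with z hz
  replace hz : 2 ≤ ‖z‖ := hz
  have hz0 : (0:ℝ) < ‖z‖ := by linarith
  rw [Real.norm_of_nonneg (Real.rpow_nonneg (norm_nonneg z) p)]
  have hkey : (1 + ‖z‖) / 2 ≤ ‖z‖ := by
    linarith
  calc ‖z‖ ^ p ≤ ((1 + ‖z‖) / 2) ^ p :=
        Real.rpow_le_rpow_of_nonpos (by positivity) hkey (by linarith)
    _ = (2:ℝ) ^ (-p) * (1 + ‖z‖) ^ p := by
        rw [Real.div_rpow (by positivity) (by norm_num : (0:ℝ) ≤ 2),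
          Real.rpow_neg (by norm_num : (0:ℝ) ≤ 2), div_eq_mul_inv, mul_comm]

/-- For all `α, β > 0` with `α + β ∈ (0, 3/2) \ {1}`, the integral defining
`F(α,β) = ∫_{ℝ²} |z|^{2(α-1)} (|z-1|^{2(β-1)} - 𝟙_{|z|≥1} |z|^{2(β-1)}) d²z - π/(α+β-1)`
converges absolutely, i.e. the integrand is (absolutely) integrable on the plane. -/
theorem selberg_truncated_integrand_integrable (α β : ℝ) (hα : 0 < α) (hβ : 0 < β)
    (h0 : 0 < α + β) (h32 : α + β < 3 / 2) (h1 : α + β ≠ 1) :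
    Integrable (fun z : ℂ => ‖z‖ ^ (2 * (α - 1)) *
        (‖z - 1‖ ^ (2 * (β - 1)) -
          (if 1 ≤ ‖z‖ then ‖z‖ ^ (2 * (β - 1)) else 0))) := by
  have ha2 : (-2:ℝ) < 2 * (α - 1) := by linarith
  have hq2 : (-2:ℝ) < 2 * (β - 1) := by linarith
  have hq1 : 2 * (β - 1) ≤ 1 := by linarith
  have hp : 2 * (α - 1) + (2 * (β - 1) - 1) < -2 := by linarith
  have hm1 : Measurable fun z : ℂ => ‖z‖ ^ (2 * (α - 1)) := by
    fun_prop
  have hm2 : Measurable fun z : ℂ => ‖z - 1‖ ^ (2 * (β - 1)) := by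
    fun_prop
  have hm3 : Measurable fun z : ℂ => ‖z‖ ^ (2 * (β - 1)) := by
    fun_prop
  have hS : MeasurableSet {z : ℂ | 1 ≤ ‖z‖} :=
    measurableSet_le measurable_const continuous_norm.measurable
  have hS2 : MeasurableSet {z : ℂ | 2 ≤ ‖z‖} :=
    measurableSet_le measurable_const continuous_norm.measurable
  have hmeasF : Measurable (fun z : ℂ => ‖z‖ ^ (2 * (α - 1)) *
      (‖z - 1‖ ^ (2 * (β - 1)) -
        (if 1 ≤ ‖z‖ then ‖z‖ ^ (2 * (β - 1)) else 0))) :=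
    hm1.mul (hm2.sub (Measurable.ite hS hm3 measurable_const))
  have hmeasG : Measurable (fun z : ℂ =>
      ‖z‖ ^ (2 * (α - 1)) * ‖z - 1‖ ^ (2 * (β - 1))) := hm1.mul hm2
  -- integrability of |z|^a |z-1|^q on the closed ball of radius 2
  have hGH : IntegrableOn
      (fun z : ℂ => ‖z‖ ^ (2 * (α - 1)) * ‖z - 1‖ ^ (2 * (β - 1)))
      (Metric.closedBall 0 2) := by
    have hcover : Metric.closedBall (0:ℂ) 2 ⊆
        Metric.closedBall 1 2⁻¹ ∪ (Metric.closedBall 0 2 \ Metric.closedBall 1 2⁻¹) := by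
      intro z hz
      by_cases h : z ∈ Metric.closedBall (1:ℂ) 2⁻¹
      · exact Or.inl h
      · exact Or.inr ⟨hz, h⟩
    refine (IntegrableOn.union ?_ ?_).mono_set hcover
    · refine Integrable.mono'
        ((integrableOn_abs_sub_one_rpow_closedBall hq2 2⁻¹).const_mul
          ((2:ℝ) ^ |2 * (α - 1)|)) hmeasG.aestronglyMeasurable ?_
      filter_upwards [ae_restrict_mem measurableSet_closedBall] with z hz
      have hz1 : ‖z - 1‖ ≤ 2⁻¹ := by
        rw [Metric.mem_closedBall, Complex.dist_eq] at hz; exact hz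
      have htri : (1:ℝ) ≤ ‖1 - z‖ + ‖z‖ := by
        have := norm_add_le (1 - z) z
        simpa using this
      have hsub : ‖1 - z‖ = ‖z - 1‖ := norm_sub_rev 1 z
      have hlo : (2:ℝ)⁻¹ ≤ ‖z‖ := by rw [hsub] at htri; linarith
      have hhi : ‖z‖ ≤ 2 := by
        have := norm_add_le (z - 1) 1
        simp only [sub_add_cancel, norm_one] at this
        linarith
      rw [Real.norm_of_nonneg (mul_nonneg (Real.rpow_nonneg (norm_nonneg _) _)
        (Real.rpow_nonneg (norm_nonneg _) _))]
      exact mul_le_mul_of_nonneg_right (rpow_le_c_pow_abs one_le_two hlo hhi)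
        (Real.rpow_nonneg (norm_nonneg _) _)
    · refine Integrable.mono'
        (((integrableOn_abs_rpow_closedBall ha2 2).mono_set diff_subset).const_mul
          ((3:ℝ) ^ |2 * (β - 1)|)) hmeasG.aestronglyMeasurable ?_
      filter_upwards [ae_restrict_mem (measurableSet_closedBall.diff measurableSet_closedBall)]
        with z hz
      obtain ⟨hzin, hzout⟩ := hz
      have hz2 : ‖z‖ ≤ 2 := by
        rw [Metric.mem_closedBall, Complex.dist_eq, sub_zero] at hzin; exact hzin
      have hz1 : (2:ℝ)⁻¹ < ‖z - 1‖ := by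
        rw [Metric.mem_closedBall, Complex.dist_eq, not_le] at hzout; exact hzout
      have hlo : (3:ℝ)⁻¹ ≤ ‖z - 1‖ := by
        have : (3:ℝ)⁻¹ ≤ (2:ℝ)⁻¹ := by norm_num
        linarith
      have hhi : ‖z - 1‖ ≤ 3 := by
        have := norm_add_le z (-1)
        simp only [← sub_eq_add_neg, norm_neg, norm_one] at this
        linarith
      rw [Real.norm_of_nonneg (mul_nonneg (Real.rpow_nonneg (norm_nonneg _) _)
        (Real.rpow_nonneg (norm_nonneg _) _))]
      calc ‖z‖ ^ (2 * (α - 1)) * ‖z - 1‖ ^ (2 * (β - 1))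
          ≤ ‖z‖ ^ (2 * (α - 1)) * (3:ℝ) ^ |2 * (β - 1)| :=
            mul_le_mul_of_nonneg_left (rpow_le_c_pow_abs (by norm_num) hlo hhi)
              (Real.rpow_nonneg (norm_nonneg _) _)
        _ = (3:ℝ) ^ |2 * (β - 1)| * ‖z‖ ^ (2 * (α - 1)) := mul_comm _ _
  -- part A : the closed ball of radius 2
  have hA : IntegrableOn (fun z : ℂ => ‖z‖ ^ (2 * (α - 1)) *
      (‖z - 1‖ ^ (2 * (β - 1)) -
        (if 1 ≤ ‖z‖ then ‖z‖ ^ (2 * (β - 1)) else 0)))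
      (Metric.closedBall 0 2) := by
    have hconst : IntegrableOn (fun _ : ℂ => (2:ℝ) ^ |2 * (α - 1) + 2 * (β - 1)|)
        (Metric.closedBall 0 2) :=
      integrableOn_const measure_closedBall_lt_top.ne
    refine Integrable.mono' (hGH.add hconst) hmeasF.aestronglyMeasurable ?_
    filter_upwards [ae_restrict_mem measurableSet_closedBall] with z hz
    have hz2 : ‖z‖ ≤ 2 := by
      rw [Metric.mem_closedBall, Complex.dist_eq, sub_zero] at hz; exact hz
    have hind : ‖z‖ ^ (2 * (α - 1)) *
        (if 1 ≤ ‖z‖ then ‖z‖ ^ (2 * (β - 1)) else 0)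
        ≤ (2:ℝ) ^ |2 * (α - 1) + 2 * (β - 1)| := by
      split_ifs with h
      · have hz0 : (0:ℝ) < ‖z‖ := lt_of_lt_of_le one_pos h
        rw [← Real.rpow_add hz0]
        exact rpow_le_c_pow_abs one_le_two (by linarith [(by norm_num : (2:ℝ)⁻¹ ≤ 1)]) hz2
      · rw [mul_zero]; positivity
    have hnn1 : (0:ℝ) ≤ ‖z‖ ^ (2 * (α - 1)) :=
      Real.rpow_nonneg (norm_nonneg _) _
    have habs : |‖z - 1‖ ^ (2 * (β - 1)) -
        (if 1 ≤ ‖z‖ then ‖z‖ ^ (2 * (β - 1)) else 0)|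
        ≤ ‖z - 1‖ ^ (2 * (β - 1)) +
          (if 1 ≤ ‖z‖ then ‖z‖ ^ (2 * (β - 1)) else 0) := by
      refine (abs_sub _ _).trans ?_
      rw [abs_of_nonneg (Real.rpow_nonneg (norm_nonneg _) _),
        abs_of_nonneg (by split_ifs <;> [exact Real.rpow_nonneg (norm_nonneg _) _; rfl] :
          (0:ℝ) ≤ if 1 ≤ ‖z‖ then ‖z‖ ^ (2 * (β - 1)) else 0)]
    rw [Real.norm_eq_abs, abs_mul, abs_of_nonneg hnn1]
    calc ‖z‖ ^ (2 * (α - 1)) * |‖z - 1‖ ^ (2 * (β - 1)) -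
          (if 1 ≤ ‖z‖ then ‖z‖ ^ (2 * (β - 1)) else 0)|
        ≤ ‖z‖ ^ (2 * (α - 1)) * (‖z - 1‖ ^ (2 * (β - 1)) +
          (if 1 ≤ ‖z‖ then ‖z‖ ^ (2 * (β - 1)) else 0)) :=
          mul_le_mul_of_nonneg_left habs hnn1
      _ = ‖z‖ ^ (2 * (α - 1)) * ‖z - 1‖ ^ (2 * (β - 1)) +
          ‖z‖ ^ (2 * (α - 1)) *
            (if 1 ≤ ‖z‖ then ‖z‖ ^ (2 * (β - 1)) else 0) := mul_add _ _ _
      _ ≤ ‖z‖ ^ (2 * (α - 1)) * ‖z - 1‖ ^ (2 * (β - 1)) +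
          (2:ℝ) ^ |2 * (α - 1) + 2 * (β - 1)| := by linarith
  -- part B : outside the ball of radius 2
  have hB : IntegrableOn (fun z : ℂ => ‖z‖ ^ (2 * (α - 1)) *
      (‖z - 1‖ ^ (2 * (β - 1)) -
        (if 1 ≤ ‖z‖ then ‖z‖ ^ (2 * (β - 1)) else 0)))
      {z : ℂ | 2 ≤ ‖z‖} := by
    refine Integrable.mono' ((integrableOn_abs_rpow_atTop hp).const_mul
      (|2 * (β - 1)| / 2 ^ (2 * (β - 1) - 1))) hmeasF.aestronglyMeasurable ?_
    filter_upwards [ae_restrict_mem hS2] with z hz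
    replace hz : 2 ≤ ‖z‖ := hz
    have hv0 : (0:ℝ) < ‖z‖ := by linarith
    have hind : (if 1 ≤ ‖z‖ then ‖z‖ ^ (2 * (β - 1)) else 0)
        = ‖z‖ ^ (2 * (β - 1)) := if_pos (by linarith)
    have hu1 : ‖z‖ - 1 ≤ ‖z - 1‖ := by
      have := norm_sub_norm_le z 1
      simpa using this
    have hu2 : ‖z - 1‖ ≤ ‖z‖ + 1 := by
      have := norm_add_le z (-1)
      simp only [← sub_eq_add_neg, norm_neg, norm_one] at this
      linarith
    have key : |‖z - 1‖ ^ (2 * (β - 1)) - ‖z‖ ^ (2 * (β - 1))|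
        ≤ |2 * (β - 1)| * (‖z‖ / 2) ^ (2 * (β - 1) - 1) := by
      have hhalfpos : (0:ℝ) < ‖z‖ / 2 := by linarith
      rcases le_total (‖z - 1‖) (‖z‖) with hc | hc
      · have h1u : (1:ℝ) ≤ ‖z - 1‖ := by linarith
        have hb := rpow_sub_rpow_bound hq1 h1u hc
        have hmin : ‖z‖ / 2 ≤ ‖z - 1‖ := by linarith
        calc |‖z - 1‖ ^ (2 * (β - 1)) - ‖z‖ ^ (2 * (β - 1))|
            = |‖z‖ ^ (2 * (β - 1)) - ‖z - 1‖ ^ (2 * (β - 1))| :=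
              abs_sub_comm _ _
          _ ≤ |2 * (β - 1)| * ‖z - 1‖ ^ (2 * (β - 1) - 1) *
              (‖z‖ - ‖z - 1‖) := hb
          _ ≤ |2 * (β - 1)| * (‖z‖ / 2) ^ (2 * (β - 1) - 1) * 1 := by
              refine mul_le_mul (mul_le_mul_of_nonneg_left
                (Real.rpow_le_rpow_of_nonpos hhalfpos hmin (by linarith)) (abs_nonneg _)) ?_
                (by linarith) (by positivity)
              linarith
          _ = |2 * (β - 1)| * (‖z‖ / 2) ^ (2 * (β - 1) - 1) := mul_one _
      · have h1v : (1:ℝ) ≤ ‖z‖ := by linarith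
        have hb := rpow_sub_rpow_bound hq1 h1v hc
        have hmin : ‖z‖ / 2 ≤ ‖z‖ := by linarith
        calc |‖z - 1‖ ^ (2 * (β - 1)) - ‖z‖ ^ (2 * (β - 1))|
            ≤ |2 * (β - 1)| * ‖z‖ ^ (2 * (β - 1) - 1) *
              (‖z - 1‖ - ‖z‖) := hb
          _ ≤ |2 * (β - 1)| * (‖z‖ / 2) ^ (2 * (β - 1) - 1) * 1 := by
              refine mul_le_mul (mul_le_mul_of_nonneg_left
                (Real.rpow_le_rpow_of_nonpos hhalfpos hmin (by linarith)) (abs_nonneg _)) ?_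
                (by linarith) (by positivity)
              linarith
          _ = |2 * (β - 1)| * (‖z‖ / 2) ^ (2 * (β - 1) - 1) := mul_one _
    rw [hind, Real.norm_eq_abs, abs_mul,
      abs_of_nonneg (Real.rpow_nonneg (norm_nonneg _) _)]
    calc ‖z‖ ^ (2 * (α - 1)) *
          |‖z - 1‖ ^ (2 * (β - 1)) - ‖z‖ ^ (2 * (β - 1))|
        ≤ ‖z‖ ^ (2 * (α - 1)) *
          (|2 * (β - 1)| * (‖z‖ / 2) ^ (2 * (β - 1) - 1)) :=
          mul_le_mul_of_nonneg_left key (Real.rpow_nonneg (norm_nonneg _) _)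
      _ = |2 * (β - 1)| / 2 ^ (2 * (β - 1) - 1) *
          ‖z‖ ^ (2 * (α - 1) + (2 * (β - 1) - 1)) := by
          rw [Real.div_rpow (norm_nonneg _) (by norm_num : (0:ℝ) ≤ 2),
            Real.rpow_add hv0]
          ring
  rw [← integrableOn_univ]
  have hcover : (univ : Set ℂ) ⊆ Metric.closedBall 0 2 ∪ {z : ℂ | 2 ≤ ‖z‖} := by
    intro z _
    rcases le_total (‖z‖) 2 with h | h
    · exact Or.inl (by rw [Metric.mem_closedBall, Complex.dist_eq, sub_zero]; exact h)
    · exact Or.inr h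
  exact (hA.union hB).mono_set hcover
end

section
/- Let $\rho: [0,\infty) \to [0,\infty)$ be $C^\infty$ with compact support and $\pi \int_0^\infty \rho(t)\,dt = 1$, and set $\rho_\epsilon(x) = \epsilon^{-2}\rho(|x|^2/\epsilon^2)$ for $x \in \mathbb{C}$. For $x, y \in \mathbb{C}$ with $y \ne 0$ and $|y| \ge 2\epsilon R$ where $R$ bounds the support radius of $\rho$, one has the mollified logarithm bound: $-\int_{\mathbb{C}} \ln|x - \tfrac{1}{y + \epsilon u}|\, \rho(|u|^2)\, d^2u \ge \ln\frac{1}{|x - \frac{1}{y}| + \epsilon C_R} - C_R'$ whenever $x$ and $1/y$ lie in a ball $B(0,R)$, for constants $C_R, C_R'$ depending only on $R$. -/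
open MeasureTheory Real

open MeasureTheory Real Set Metric

lemma integrableOn_log_abs_sub_cb1 (c : ℂ) :
    IntegrableOn (fun u : ℂ => Real.log (‖u - c‖)) (closedBall c 1) := by
  set f : ℂ → ℝ := fun u => Real.log (‖u - c‖) with hf
  have meas : Measurable f :=
    Real.measurable_log.comp ((continuous_norm.comp
      (continuous_id.sub continuous_const)).measurable)
  set μ := volume.restrict (closedBall c 1) with hμ
  refine ⟨meas.aestronglyMeasurable, ?_⟩
  rw [hasFiniteIntegral_def]
  have hnonpos : ∀ᵐ u ∂μ, u ∈ closedBall c 1 := ae_restrict_mem measurableSet_closedBall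
  have h1 : ∀ᵐ u ∂μ, ‖f u‖ₑ = ENNReal.ofReal (-f u) := by
    filter_upwards [hnonpos] with u hu
    have : f u ≤ 0 := by
      apply Real.log_nonpos (by positivity)
      simpa [Complex.dist_eq] using (mem_closedBall.1 hu)
    rw [← ofReal_norm, Real.norm_eq_abs, abs_of_nonpos this]
  have h2 : ∀ᵐ u ∂μ, 0 ≤ -f u := by
    filter_upwards [hnonpos] with u hu
    have : f u ≤ 0 := by
      apply Real.log_nonpos (by positivity)
      simpa [Complex.dist_eq] using (mem_closedBall.1 hu)
    linarith
  calc ∫⁻ u, ‖f u‖ₑ ∂μ = ∫⁻ u, ENNReal.ofReal (-f u) ∂μ := lintegral_congr_ae h1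
    _ = ∫⁻ t in Ioi (0:ℝ), μ {a | t ≤ -f a} :=
        lintegral_eq_lintegral_meas_le μ h2 meas.neg.aemeasurable
    _ ≤ ∫⁻ t in Ioi (0:ℝ), ENNReal.ofReal (Real.exp (-(2*t)) * π) := by
        apply setLIntegral_mono' measurableSet_Ioi
        intro t ht
        have hsub : {a : ℂ | t ≤ -f a} ⊆ closedBall c (Real.exp (-t)) := by
          intro a ha
          simp only [mem_setOf_eq] at ha
          rcases eq_or_ne a c with rfl | hac
          · simp [mem_closedBall, (Real.exp_pos (-t)).le]
          · have hpos : 0 < ‖a - c‖ := by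
              simpa using norm_pos_iff.mpr (sub_ne_zero.2 hac)
            have : Real.log (‖a - c‖) ≤ -t := by linarith
            have := (Real.log_le_iff_le_exp hpos).1 this
            simpa [mem_closedBall, Complex.dist_eq] using this
        calc μ {a : ℂ | t ≤ -f a} ≤ volume {a : ℂ | t ≤ -f a} := Measure.restrict_le_self _
          _ ≤ volume (closedBall c (Real.exp (-t))) := measure_mono hsub
          _ = ENNReal.ofReal (Real.exp (-t)) ^ 2 * NNReal.pi := Complex.volume_closedBall c _
          _ = ENNReal.ofReal (Real.exp (-(2*t)) * π) := by
              rw [← ENNReal.ofReal_pow (Real.exp_pos _).le, ← Real.exp_nat_mul,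
                ENNReal.ofReal_mul (Real.exp_pos _).le, ← NNReal.coe_real_pi,
                ENNReal.ofReal_coe_nnreal]
              norm_num
    _ < ⊤ := by
        apply IntegrableOn.setLIntegral_lt_top
        exact ((exp_neg_integrableOn_Ioi 0 (by norm_num : (0:ℝ) < 2)).congr_fun
          (fun x _ => by ring_nf) measurableSet_Ioi).mul_const π

lemma integrableOn_log_abs_sub (c : ℂ) (r : ℝ) :
    IntegrableOn (fun u : ℂ => Real.log (‖u - c‖)) (closedBall 0 r) := by
  set f : ℂ → ℝ := fun u => Real.log (‖u - c‖) with hf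
  have meas : Measurable f :=
    Real.measurable_log.comp ((continuous_norm.comp
      (continuous_id.sub continuous_const)).measurable)
  have h1 : IntegrableOn f (closedBall 0 r ∩ closedBall c 1) :=
    (integrableOn_log_abs_sub_cb1 c).mono_set inter_subset_right
  have h2 : IntegrableOn f (closedBall 0 r \ closedBall c 1) := by
    have hfin : volume (closedBall (0:ℂ) r \ closedBall c 1) < ⊤ :=
      lt_of_le_of_lt (measure_mono diff_subset) measure_closedBall_lt_top
    refine Integrable.mono'
      (integrableOn_const (C := Real.log (|r| + ‖c‖ + 1)) hfin.ne)
      meas.aestronglyMeasurable ?_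
    rw [ae_restrict_iff' (measurableSet_closedBall.diff measurableSet_closedBall)]
    filter_upwards with u hu
    obtain ⟨hu1, hu2⟩ := hu
    have hd : 1 < ‖u - c‖ := by
      have := mem_closedBall.not.1 hu2
      simpa [Complex.dist_eq, not_le] using this
    have hup : ‖u‖ ≤ r := by simpa [Complex.dist_eq, mem_closedBall] using hu1
    have hub : ‖u - c‖ ≤ |r| + ‖c‖ + 1 := by
      calc ‖u - c‖ ≤ ‖u‖ + ‖c‖ := by
            simpa using norm_sub_le u c
        _ ≤ |r| + ‖c‖ + 1 := by
            have : ‖u‖ ≤ |r| := hup.trans (le_abs_self r)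
            linarith
    have hlog0 : 0 ≤ f u := Real.log_nonneg hd.le
    have : f u ≤ Real.log (|r| + ‖c‖ + 1) := Real.log_le_log (by linarith) hub
    rw [Real.norm_eq_abs, abs_of_nonneg hlog0]
    exact this
  have := h1.union h2
  rwa [Set.inter_union_diff] at this

lemma integral_rho_normSq (ρ : ℝ → ℝ) (hcont : Continuous ρ)
    (hρnorm : π * ∫ t in Set.Ioi (0:ℝ), ρ t = 1) :
    ∫ u : ℂ, ρ (Complex.normSq u) = 1 := by
  have h0 : (fun u : ℂ => ρ (Complex.normSq u)) = fun u : ℂ => (fun r : ℝ => ρ (r ^ 2)) ‖u‖ := by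
    funext u
    simp [Complex.normSq_eq_norm_sq]
  rw [h0, MeasureTheory.integral_fun_norm_addHaar (volume : Measure ℂ) (fun r => ρ (r ^ 2))]
  have hdim : Module.finrank ℝ ℂ = 2 := Complex.finrank_real_complex
  rw [hdim]
  have hvol : (volume : Measure ℂ).real (ball 0 1) = π := by
    rw [measureReal_def, Complex.volume_ball]
    simp
  rw [hvol]
  -- substitution t = x^2
  have himg : (fun x : ℝ => x ^ 2) '' Ioi 0 = Ioi 0 := by
    ext t
    constructor
    · rintro ⟨s, hs, rfl⟩
      exact pow_pos (mem_Ioi.mp hs) 2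
    · intro ht
      exact ⟨Real.sqrt t, Real.sqrt_pos.2 ht, Real.sq_sqrt ht.le⟩
  have hinj : Set.InjOn (fun x : ℝ => x ^ 2) (Ioi 0) := by
    intro s hs u hu h
    simp only [mem_Ioi] at hs hu
    simp only at h
    apply le_antisymm <;> nlinarith
  have hderiv : ∀ s ∈ Ioi (0:ℝ), HasDerivWithinAt (fun x : ℝ => x ^ 2)
      (2 * s) (Ioi 0) s := by
    intro s _
    simpa using (hasDerivAt_pow 2 s).hasDerivWithinAt
  have hsub := integral_image_eq_integral_abs_deriv_smul measurableSet_Ioi hderiv hinj ρ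
  rw [himg] at hsub
  have hsub2 : ∫ t in Ioi (0:ℝ), ρ t = 2 * ∫ x in Ioi (0:ℝ), x * ρ (x ^ 2) := by
    rw [hsub, ← integral_const_mul]
    apply setIntegral_congr_fun measurableSet_Ioi
    intro s hs
    simp only [mem_Ioi] at hs
    simp only [smul_eq_mul]
    rw [abs_of_pos (by linarith : (0:ℝ) < 2 * s)]
    ring
  have : ∫ y in Ioi (0:ℝ), y ^ (2 - 1) • ρ (y ^ 2) = ∫ x in Ioi (0:ℝ), x * ρ (x ^ 2) := by
    apply setIntegral_congr_fun measurableSet_Ioi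
    intro s _
    simp
  rw [this]
  rw [hsub2] at hρnorm
  rw [nsmul_eq_mul, smul_eq_mul]
  push_cast
  linarith

lemma integrable_log_mul_rho (ρ : ℝ → ℝ) (hcont : Continuous ρ) (K : ℝ)
    (hKb : ∀ t, |ρ t| ≤ K) (R : ℝ) (hR : 0 < R)
    (hgsupp : ∀ u : ℂ, ρ (Complex.normSq u) ≠ 0 → ‖u‖ ≤ R)
    (x y : ℂ) (ε : ℝ) (hε : 0 < ε) (hy : 0 < ‖y‖)
    (hne : ∀ u : ℂ, ‖u‖ ≤ R → y + (ε:ℂ)*u ≠ 0)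
    (hlow : ∀ u : ℂ, ‖u‖ ≤ R →
      ‖y‖ / 2 ≤ ‖y + (ε:ℂ)*u‖)
    (hup : ∀ u : ℂ, ‖u‖ ≤ R → ‖y + (ε:ℂ)*u‖ ≤ 2 * ‖y‖) :
    Integrable (fun u : ℂ =>
      Real.log (‖x - (y + (ε:ℂ)*u)⁻¹‖) * ρ (Complex.normSq u)) := by
  classical
  have hεc : ((ε:ℂ)) ≠ 0 := Complex.ofReal_ne_zero.2 hε.ne'
  set S := closedBall (0:ℂ) R with hS
  set F : ℂ → ℝ := fun u =>
    Real.log (‖x - (y + (ε:ℂ)*u)⁻¹‖) * ρ (Complex.normSq u) with hF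
  have measρ : Measurable fun u : ℂ => ρ (Complex.normSq u) :=
    (hcont.comp Complex.continuous_normSq).measurable
  have measw : Measurable fun u : ℂ => (y + (ε:ℂ)*u)⁻¹ :=
    ((continuous_const.add (continuous_const.mul continuous_id)).measurable).inv
  have measF : Measurable F :=
    (Real.measurable_log.comp
      (continuous_norm.measurable.comp (measurable_const.sub measw))).mul measρ
  have hmemS : ∀ u : ℂ, ρ (Complex.normSq u) ≠ 0 → u ∈ S := by
    intro u hu
    simpa [hS, mem_closedBall, Complex.dist_eq] using hgsupp u hu
  have hsupp : Function.support F ⊆ S := by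
    intro u hu
    apply hmemS
    intro h
    simp [hF, h] at hu
  rw [← integrableOn_iff_integrable_of_support_subset hsupp]
  -- on S, rewrite F as a difference of logs, up to a null set
  set u₀ : ℂ := (x⁻¹ - y) / ε with hu₀
  set G : ℂ → ℝ := fun u =>
    (Real.log (‖x * (y + (ε:ℂ)*u) - 1‖) -
      Real.log (‖y + (ε:ℂ)*u‖)) * ρ (Complex.normSq u) with hG
  have hNnull : volume {u : ℂ | x * (y + (ε:ℂ)*u) - 1 = 0} = 0 := by
    refine measure_mono_null ?_ (measure_singleton u₀)
    · intro u hu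
      simp only [Set.mem_setOf_eq, sub_eq_zero] at hu
      have hx0 : x ≠ 0 := by
        intro h; rw [h] at hu; simp at hu
      rw [Set.mem_singleton_iff, hu₀, eq_div_iff hεc]
      apply mul_left_cancel₀ hx0
      rw [mul_sub, mul_inv_cancel₀ hx0]
      linear_combination hu
  have haeN : ∀ᵐ u : ℂ, x * (y + (ε:ℂ)*u) - 1 ≠ 0 := by
    rw [MeasureTheory.ae_iff]
    simpa using hNnull
  have hFG : F =ᵐ[volume.restrict S] G := by
    rw [Filter.EventuallyEq, ae_restrict_iff' measurableSet_closedBall]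
    filter_upwards [haeN] with u hNu huS
    have huR : ‖u‖ ≤ R := by
      simpa [hS, mem_closedBall, Complex.dist_eq] using huS
    have hwne := hne u huR
    have habs0 : ‖y + (ε:ℂ)*u‖ ≠ 0 := by
      simpa using hwne
    have hkey : x - (y + (ε:ℂ)*u)⁻¹ = (x * (y + (ε:ℂ)*u) - 1) * (y + (ε:ℂ)*u)⁻¹ := by
      field_simp
    simp only [hF, hG, hkey]
    rw [norm_mul, norm_inv,
      Real.log_mul (by simpa [sub_eq_zero, norm_eq_zero] using hNu)
        (inv_ne_zero habs0), Real.log_inv]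
    ring
  apply Integrable.congr _ hFG.symm
  have hKnn : 0 ≤ K := (abs_nonneg _).trans (hKb 0)
  have hρint : IntegrableOn (fun u : ℂ => ρ (Complex.normSq u)) S := by
    refine Integrable.mono' (integrableOn_const (C := K) measure_closedBall_lt_top.ne)
      measρ.aestronglyMeasurable ?_
    filter_upwards with u
    rw [Real.norm_eq_abs]
    exact hKb _
  have measden : Measurable fun u : ℂ => Real.log (‖y + (ε:ℂ)*u‖) :=
    Real.measurable_log.comp (continuous_norm.comp
      (continuous_const.add (continuous_const.mul continuous_id))).measurable
  set My : ℝ := max |Real.log (‖y‖ / 2)| |Real.log (2 * ‖y‖)| with hMy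
  have hMynn : 0 ≤ My := le_trans (abs_nonneg _) (le_max_left _ _)
  have hG2 : IntegrableOn
      (fun u : ℂ => Real.log (‖y + (ε:ℂ)*u‖) * ρ (Complex.normSq u)) S := by
    refine Integrable.mono' (integrableOn_const (C := My * K) measure_closedBall_lt_top.ne)
      (measden.mul measρ).aestronglyMeasurable ?_
    rw [ae_restrict_iff' measurableSet_closedBall]
    filter_upwards with u huS
    have huR : ‖u‖ ≤ R := by
      simpa [hS, mem_closedBall, Complex.dist_eq] using huS
    have h1 := hlow u huR
    have h2 := hup u huR
    have hlog1 : Real.log (‖y‖ / 2) ≤ Real.log (‖y + (ε:ℂ)*u‖) :=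
      Real.log_le_log (by linarith) h1
    have hlog2 : Real.log (‖y + (ε:ℂ)*u‖) ≤ Real.log (2 * ‖y‖) :=
      Real.log_le_log (by linarith) h2
    rw [Real.norm_eq_abs, abs_mul]
    exact mul_le_mul (abs_le_max_abs_abs hlog1 hlog2) (hKb _) (abs_nonneg _) hMynn
  have hG1 : IntegrableOn
      (fun u : ℂ => Real.log (‖x * (y + (ε:ℂ)*u) - 1‖) * ρ (Complex.normSq u)) S := by
    by_cases hx0 : x = 0
    · have hzero : (fun u : ℂ =>
          Real.log (‖x * (y + (ε:ℂ)*u) - 1‖) * ρ (Complex.normSq u)) =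
          fun _ => (0:ℝ) := by
        funext u
        simp [hx0]
      rw [hzero]
      exact integrableOn_const (C := (0:ℝ)) measure_closedBall_lt_top.ne
    · have hεu₀ : (ε:ℂ) * u₀ = x⁻¹ - y := by
        rw [hu₀]
        field_simp
      have hfac : ∀ u : ℂ, x * (y + (ε:ℂ)*u) - 1 = (x * (ε:ℂ)) * (u - u₀) := by
        intro u
        linear_combination x * hεu₀ + mul_inv_cancel₀ hx0
      have hxε : ‖x * (ε:ℂ)‖ ≠ 0 := by
        simp [hx0, hε.ne']
      have hae : ∀ᵐ u ∂(volume.restrict S),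
          (fun u : ℂ => (Real.log (‖x * (ε:ℂ)‖) +
            Real.log (‖u - u₀‖)) * ρ (Complex.normSq u)) u =
          (fun u : ℂ => Real.log (‖x * (y + (ε:ℂ)*u) - 1‖) *
            ρ (Complex.normSq u)) u := by
        have h0 : ∀ᵐ u : ℂ ∂(volume.restrict S), u ≠ u₀ := by
          refine ae_restrict_of_ae ?_
          rw [MeasureTheory.ae_iff]
          simpa using measure_singleton u₀
        filter_upwards [h0] with u hu
        have h2 : ‖u - u₀‖ ≠ 0 := by
          simpa [sub_eq_zero, norm_eq_zero] using hu
        rw [hfac u, norm_mul (x * (ε:ℂ)) (u - u₀), Real.log_mul hxε h2]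
      refine Integrable.congr ?_ hae
      have hB : IntegrableOn (fun u : ℂ =>
          ρ (Complex.normSq u) * Real.log (‖u - u₀‖)) S := by
        refine (integrableOn_log_abs_sub u₀ R).bdd_mul measρ.aestronglyMeasurable (c := K) (Filter.Eventually.of_forall ?_)
        intro u
        rw [Real.norm_eq_abs]
        exact hKb _
      have hA : IntegrableOn (fun u : ℂ =>
          Real.log (‖x * (ε:ℂ)‖) * ρ (Complex.normSq u)) S :=
        hρint.const_mul _
      have := hA.add (IntegrableOn.congr_fun hB
        (fun u _ => mul_comm _ _) measurableSet_closedBall)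
      refine IntegrableOn.congr_fun this (fun u _ => ?_) measurableSet_closedBall
      simp only [Pi.add_apply]
      ring
  have := hG1.sub hG2
  refine IntegrableOn.congr_fun this (fun u _ => ?_) measurableSet_closedBall
  simp only [Pi.sub_apply, hG]
  ring

/-- Mollified logarithm bound for the Möbius-transformed regularized Green function:
with `ρ : [0,∞) → [0,∞)` smooth, compactly supported, `π∫₀^∞ ρ = 1`, and `ρ(t) = 0` for
`t > R²` (so that `u ↦ ρ(|u|²)` is supported in `|u| ≤ R`), there are constants
`C_R, C_R' > 0` such that for all `ε > 0` and all `x, y` with `y ≠ 0`, `|y| ≥ 2εR`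
and `x, 1/y ∈ B(0,R)`:
`-∫_ℂ ln|x - 1/(y+εu)| ρ(|u|²) d²u ≥ ln(1/(|x - 1/y| + ε C_R)) - C_R'`. -/
theorem mollified_log_lower_bound
    (ρ : ℝ → ℝ) (hρsmooth : ContDiff ℝ (⊤ : ℕ∞) ρ) (hρsupp : HasCompactSupport ρ)
    (hρpos : ∀ t : ℝ, 0 ≤ ρ t) (hρneg : ∀ t : ℝ, t < 0 → ρ t = 0)
    (hρnorm : π * ∫ t in Set.Ioi (0 : ℝ), ρ t = 1)
    (R : ℝ) (hR : 0 < R) (hRsupp : ∀ t : ℝ, R ^ 2 < t → ρ t = 0) :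
    ∃ C C' : ℝ, 0 < C ∧ 0 < C' ∧
      ∀ ε : ℝ, 0 < ε → ∀ x y : ℂ, y ≠ 0 → 2 * ε * R ≤ ‖y‖ →
        ‖x‖ < R → ‖y⁻¹‖ < R →
        Real.log (1 / (‖x - y⁻¹‖ + ε * C)) - C' ≤
          -∫ u : ℂ, Real.log (‖x - (y + (ε : ℂ) * u)⁻¹‖) * ρ (Complex.normSq u) := by
  classical
  have hcont := hρsmooth.continuous
  obtain ⟨K, hKb⟩ : ∃ K : ℝ, ∀ t, |ρ t| ≤ K := by
    obtain ⟨K, hK⟩ := hρsupp.exists_bound_of_continuous hcont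
    exact ⟨K, fun t => by simpa [Real.norm_eq_abs] using hK t⟩
  refine ⟨2 * R ^ 3, 1, by positivity, one_pos, ?_⟩
  intro ε hε x y hy0 hεR hx hyinv
  have hyinv' : (‖y‖)⁻¹ < R := by rwa [norm_inv] at hyinv
  have hyabs : 0 < ‖y‖ := norm_pos_iff.mpr hy0
  have hεc : ((ε:ℂ)) ≠ 0 := Complex.ofReal_ne_zero.2 hε.ne'
  set g : ℂ → ℝ := fun u => ρ (Complex.normSq u) with hgdef
  have measρ : Measurable g := (hcont.comp Complex.continuous_normSq).measurable
  have hgnn : ∀ u, 0 ≤ g u := fun u => hρpos _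
  have hgsupp : ∀ u : ℂ, g u ≠ 0 → ‖u‖ ≤ R := by
    intro u h
    by_contra hc
    push_neg at hc
    refine h (hRsupp _ ?_)
    rw [Complex.normSq_eq_norm_sq]
    nlinarith
  have hεu : ∀ u : ℂ, ‖u‖ ≤ R → ‖(ε:ℂ) * u‖ ≤ ε * R := by
    intro u hu
    rw [norm_mul, Complex.norm_real, Real.norm_eq_abs, abs_of_pos hε]
    exact mul_le_mul_of_nonneg_left hu hε.le
  have hlow : ∀ u : ℂ, ‖u‖ ≤ R →
      ‖y‖ / 2 ≤ ‖y + (ε:ℂ)*u‖ := by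
    intro u hu
    have h1 : y = (y + (ε:ℂ)*u) - (ε:ℂ)*u := by ring
    have htri : ‖y‖ ≤ ‖y + (ε:ℂ)*u‖ + ‖(ε:ℂ)*u‖ := by
      calc ‖y‖ = ‖(y + (ε:ℂ)*u) - (ε:ℂ)*u‖ := by rw [← h1]
        _ ≤ _ := norm_sub_le _ _
    have := hεu u hu
    linarith
  have hne : ∀ u : ℂ, ‖u‖ ≤ R → y + (ε:ℂ)*u ≠ 0 := by
    intro u hu h
    have h2 := hlow u hu
    rw [h] at h2
    simp at h2
    linarith
  have hup : ∀ u : ℂ, ‖u‖ ≤ R →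
      ‖y + (ε:ℂ)*u‖ ≤ 2 * ‖y‖ := by
    intro u hu
    have h1 := norm_add_le y ((ε:ℂ)*u)
    have h2 := hεu u hu
    nlinarith
  have hinvb : ∀ u : ℂ, ‖u‖ ≤ R →
      (‖y + (ε:ℂ)*u‖)⁻¹ ≤ 2 * R := by
    intro u hu
    have h1 := hlow u hu
    have h2 : (‖y + (ε:ℂ)*u‖)⁻¹ ≤ (‖y‖ / 2)⁻¹ :=
      inv_anti₀ (by linarith) h1
    have h3 : (‖y‖ / 2)⁻¹ = 2 * (‖y‖)⁻¹ := by
      field_simp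
    rw [h3] at h2
    nlinarith [hyinv'.le]
  have I1 : Integrable g := by
    apply Continuous.integrable_of_hasCompactSupport (hcont.comp Complex.continuous_normSq)
    apply HasCompactSupport.intro (isCompact_closedBall (0:ℂ) R)
    intro u hu
    by_contra h
    exact hu (by simpa [mem_closedBall, Complex.dist_eq] using hgsupp u h)
  have hnorm1 : ∫ u : ℂ, g u = 1 := integral_rho_normSq ρ hcont hρnorm
  set t : ℂ → ℝ := fun u => ‖x - (y + (ε:ℂ)*u)⁻¹‖ with htdef
  have meast : Measurable t := continuous_norm.measurable.comp
    (measurable_const.sub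
      ((continuous_const.add (continuous_const.mul continuous_id)).measurable).inv)
  have htb : ∀ u : ℂ, ‖u‖ ≤ R → t u ≤ 3 * R := by
    intro u hu
    have h1 : ‖(y + (ε:ℂ)*u)⁻¹‖ ≤ 2 * R := by
      rw [norm_inv]; exact hinvb u hu
    calc t u ≤ ‖x‖ + ‖(y + (ε:ℂ)*u)⁻¹‖ := norm_sub_le _ _
      _ ≤ 3 * R := by linarith [hx.le]
  have I2 : Integrable (fun u : ℂ => t u * g u) := by
    refine Integrable.mono' (I1.const_mul (3*R)) (meast.mul measρ).aestronglyMeasurable ?_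
    filter_upwards with u
    rw [Real.norm_eq_abs, abs_mul, abs_of_nonneg (hgnn u),
      abs_of_nonneg (norm_nonneg _)]
    by_cases h : g u = 0
    · simp [h]
    · exact mul_le_mul_of_nonneg_right (htb u (hgsupp u h)) (hgnn u)
  have I3 : Integrable (fun u : ℂ => Real.log (t u) * g u) :=
    integrable_log_mul_rho ρ hcont K hKb R hR hgsupp x y ε hε hyabs hne hlow hup
  set a : ℝ := ‖x - y⁻¹‖ + ε * (2 * R ^ 3) with hadef
  have ha : 0 < a := by positivity
  have hstep3 : ∫ u : ℂ, t u * g u ≤ a := by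
    have hpt : ∀ u : ℂ, t u * g u ≤ a * g u := by
      intro u
      by_cases h : g u = 0
      · simp [h]
      · have hu := hgsupp u h
        have hwne := hne u hu
        have hid2 : y⁻¹ - (y + (ε:ℂ)*u)⁻¹ = ((ε:ℂ)*u) * (y⁻¹ * (y + (ε:ℂ)*u)⁻¹) := by
          field_simp
          ring
        have habs : ‖y⁻¹ - (y + (ε:ℂ)*u)⁻¹‖
            = ε * ‖u‖ * ((‖y‖)⁻¹ * (‖y + (ε:ℂ)*u‖)⁻¹) := by
          rw [hid2]
          simp only [norm_mul, norm_inv, Complex.norm_real, Real.norm_eq_abs, abs_of_pos hε]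
        have hdiff : ‖y⁻¹ - (y + (ε:ℂ)*u)⁻¹‖ ≤ ε * (2 * R ^ 3) := by
          rw [habs]
          have hB : (‖y‖)⁻¹ * (‖y + (ε:ℂ)*u‖)⁻¹ ≤ R * (2*R) :=
            mul_le_mul hyinv'.le (hinvb u hu) (inv_nonneg.2 (norm_nonneg _)) hR.le
          have h4 : ε * ‖u‖ *
              ((‖y‖)⁻¹ * (‖y + (ε:ℂ)*u‖)⁻¹) ≤ (ε * R) * (R * (2 * R)) :=
            mul_le_mul (mul_le_mul_of_nonneg_left hu hε.le) hB
              (mul_nonneg (inv_nonneg.2 (norm_nonneg _))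
                (inv_nonneg.2 (norm_nonneg _))) (by positivity)
          calc ε * ‖u‖ * ((‖y‖)⁻¹ * (‖y + (ε:ℂ)*u‖)⁻¹)
              ≤ (ε * R) * (R * (2 * R)) := h4
            _ = ε * (2 * R ^ 3) := by ring
        have ht1 : t u ≤ a := by
          have hid : x - (y + (ε:ℂ)*u)⁻¹ = (x - y⁻¹) + (y⁻¹ - (y + (ε:ℂ)*u)⁻¹) := by ring
          calc t u = ‖(x - y⁻¹) + (y⁻¹ - (y + (ε:ℂ)*u)⁻¹)‖ := by
                rw [htdef]
                simp only
                rw [← hid]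
            _ ≤ ‖x - y⁻¹‖ + ‖y⁻¹ - (y + (ε:ℂ)*u)⁻¹‖ :=
                norm_add_le _ _
            _ ≤ a := by rw [hadef]; linarith
        exact mul_le_mul_of_nonneg_right ht1 (hgnn u)
    calc ∫ u : ℂ, t u * g u ≤ ∫ u : ℂ, a * g u := integral_mono I2 (I1.const_mul a) hpt
      _ = a := by rw [integral_const_mul, hnorm1, mul_one]
  have hZnull : volume {u : ℂ | x - (y + (ε:ℂ)*u)⁻¹ = 0} = 0 := by
    have hsub : {u : ℂ | x - (y + (ε:ℂ)*u)⁻¹ = 0} ⊆ {-y/ε, (x⁻¹ - y)/ε} := by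
      intro u hu
      simp only [Set.mem_setOf_eq, sub_eq_zero] at hu
      simp only [Set.mem_insert_iff, Set.mem_singleton_iff]
      by_cases hw : y + (ε:ℂ)*u = 0
      · left
        rw [eq_div_iff hεc]
        linear_combination hw
      · right
        have h1 : x⁻¹ = y + (ε:ℂ)*u := by rw [hu, inv_inv]
        rw [eq_div_iff hεc]
        linear_combination -h1
    exact measure_mono_null hsub
      (((Set.finite_singleton _).insert _).measure_zero volume)
  have h0 : ∀ᵐ u : ℂ, x - (y + (ε:ℂ)*u)⁻¹ ≠ 0 := by
    rw [MeasureTheory.ae_iff]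
    simpa using hZnull
  have haelog : ∀ᵐ u : ℂ, Real.log (t u) * g u ≤ (Real.log a + (t u - a)/a) * g u := by
    filter_upwards [h0] with u hu
    have htpos : 0 < t u := norm_pos_iff.mpr hu
    have hlog : Real.log (t u) ≤ Real.log a + (t u - a)/a := by
      have hdiv : Real.log (t u / a) ≤ t u / a - 1 :=
        Real.log_le_sub_one_of_pos (div_pos htpos ha)
      rw [Real.log_div htpos.ne' ha.ne'] at hdiv
      have heq : (t u - a)/a = t u / a - 1 := by
        field_simp
      linarith [heq.ge]
    exact mul_le_mul_of_nonneg_right hlog (hgnn u)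
  have hexp : (fun u : ℂ => (Real.log a + (t u - a)/a) * g u)
      = fun u => (Real.log a - 1) * g u + a⁻¹ * (t u * g u) := by
    funext u
    field_simp
    ring
  have hP : Integrable (fun u : ℂ => (Real.log a + (t u - a)/a) * g u) := by
    rw [hexp]
    exact (I1.const_mul _).add (I2.const_mul _)
  have hint : ∫ u : ℂ, Real.log (t u) * g u ≤ Real.log a := by
    have h1 := integral_mono_ae I3 hP haelog
    have h2 : ∫ u : ℂ, (Real.log a + (t u - a)/a) * g u
        = (Real.log a - 1) * (∫ u : ℂ, g u) + a⁻¹ * ∫ u : ℂ, t u * g u := by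
      rw [hexp, integral_add (I1.const_mul _) (I2.const_mul _),
        integral_const_mul, integral_const_mul]
    rw [h2, hnorm1, mul_one] at h1
    have h3 : a⁻¹ * ∫ u : ℂ, t u * g u ≤ 1 := by
      rw [← inv_mul_cancel₀ ha.ne']
      exact mul_le_mul_of_nonneg_left hstep3 (inv_nonneg.2 ha.le)
    linarith
  have hfinal : Real.log (1 / a) - 1 ≤ -∫ u : ℂ, Real.log (t u) * g u := by
    rw [one_div, Real.log_inv]
    linarith
  simpa [htdef, hgdef, hadef] using hfinal
end
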